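/- arXiv:2604.18410 — 4 statements merged into one kernel-verified Lean document; each statement's English description precedes it below -/
import Mathlib

section
/- Let G be a countable discrete group acting on the circle 𝕋 by orientation-preserving homeomorphisms. Then exactly one of the following holds: (1) the action has a finite orbit; (2) the action is minimal; (3) the action admits a unique minimal closed invariant set, which is homeomorphic to the Cantor set. -/
open MeasureTheory Topology Filter Set Function

noncomputable section

/-- The circle `ℝ/ℤ`. -/
abbrev T1 := UnitAddCircle

/-- `F : ℝ → ℝ` is an (increasing, continuous) lift of the circle map `f`. -/
def IsLiftOf (F : ℝ → ℝ) (f : T1 → T1) : Prop :=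
  Continuous F ∧ StrictMono F ∧ (∀ x : ℝ, F (x + 1) = F x + 1) ∧
    ∀ x : ℝ, ((F x : T1)) = f ((x : T1))

/-- A circle map is orientation preserving if it admits an increasing lift. -/
def OrientationPreservingMap (f : T1 → T1) : Prop := ∃ F : ℝ → ℝ, IsLiftOf F f

/-- `ρ` is the rotation number of `f`:  `Fⁿ(x)/n → ρ  (mod ℤ)` for a lift `F`. -/
def HasRotationNumber (f : T1 → T1) (ρ : T1) : Prop :=
  ∃ F : ℝ → ℝ, IsLiftOf F f ∧
    ∀ x : ℝ, Tendsto (fun n : ℕ => ((F^[n] x / (n : ℝ) : ℝ) : T1)) atTop (nhds ρ)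

variable (G : Type*) [Group G] [MulAction G T1]

/-- A set is invariant under the action. -/
def InvariantSet (S : Set T1) : Prop := ∀ g : G, ∀ x ∈ S, g • x ∈ S

/-- A minimal set: nonempty, closed, invariant, with no proper nonempty closed
invariant subset. -/
def IsMinimalSet (S : Set T1) : Prop :=
  S.Nonempty ∧ IsClosed S ∧ InvariantSet G S ∧
    ∀ Z : Set T1, Z.Nonempty → IsClosed Z → InvariantSet G Z → Z ⊆ S → Z = S

/-- The action (by homeomorphisms) is orientation preserving. -/
def OrientationPreservingAction : Prop :=
  (∀ g : G, Continuous fun x : T1 => g • x) ∧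
    ∀ g : G, OrientationPreservingMap fun x : T1 => g • x

/-- The action is free. -/
def FreeAction : Prop := ∀ (g : G) (x : T1), g • x = x → g = 1

/-- A Denjoy action: orientation preserving, non-minimal, all orbits infinite. -/
def IsDenjoy : Prop :=
  OrientationPreservingAction G ∧ ¬ IsMinimalSet G (Set.univ : Set T1) ∧
    ∀ x : T1, (MulAction.orbit G x).Infinite

/-!
Every closed invariant set contains a minimal set (Zorn). If no orbit is finite, a minimal set `K`
is infinite, hence perfect (its accumulation points form a closed invariant subset), and if
`K ≠ 𝕋` its frontier is a nonempty closed invariant subset, so `K` has empty interior. A compact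
perfect nowhere dense subset of a chart `(a, a + 1) ≅ 𝕋 ∖ {a}` is a Cantor set: cutting at points of
the complement gives a binary scheme with vanishing diameters.

Uniqueness: a minimal set `N` disjoint from `K` has a uniform distance `δ` to `K`, so every
component of `𝕋 ∖ K` meeting `N` contains a `δ`-ball, and there are finitely many of them. Their
union is invariant, so its frontier is a closed invariant subset of `K`, hence all of `K`; but it
consists of the at most two endpoints of each of these finitely many arcs, contradicting that `K`
is infinite.
-/

open scoped Pointwise
open Metric PiNat

theorem Preperfect.image_of_injOn {X Y : Type*} [TopologicalSpace X] [TopologicalSpace Y]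
    {f : X → Y} {s : Set X} (hs : Preperfect s) (hf : ∀ x ∈ s, ContinuousAt f x)
    (hinj : InjOn f s) : Preperfect (f '' s) := by
  rw [preperfect_iff_nhds] at hs ⊢
  rintro _ ⟨x, hx, rfl⟩ U hU
  obtain ⟨y, ⟨hyU, hys⟩, hyx⟩ := hs x hx _ (hf x hx hU)
  exact ⟨f y, ⟨hyU, mem_image_of_mem f hys⟩, fun h => hyx (hinj hys hx h)⟩

theorem frontier_connectedComponentIn_subset {X : Type*} [TopologicalSpace X]
    [LocallyConnectedSpace X] {U : Set X} (hU : IsOpen U) (x : X) :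
    frontier (connectedComponentIn U x) ⊆ Uᶜ := by
  rintro t ⟨hcl, hint⟩ htU
  obtain ⟨s, hst, hsx⟩ := mem_closure_iff.1 hcl _ hU.connectedComponentIn
    (mem_connectedComponentIn htU)
  rw [connectedComponentIn_eq hsx, ← connectedComponentIn_eq hst,
    hU.connectedComponentIn.interior_eq] at hint
  exact hint (mem_connectedComponentIn htU)

theorem Set.Finite.frontier_sUnion_subset {X : Type*} [TopologicalSpace X] {S : Set (Set X)}
    (hS : S.Finite) : frontier (⋃₀ S) ⊆ ⋃ s ∈ S, frontier s := by
  rintro x ⟨hcl, hint⟩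
  rw [sUnion_eq_biUnion, hS.closure_biUnion] at hcl
  obtain ⟨s, hs, hx⟩ := mem_iUnion₂.1 hcl
  exact mem_iUnion₂.2 ⟨s, hs, hx, fun h => hint (interior_mono (subset_sUnion_of_mem hs) h)⟩

theorem not_nonempty_homeomorph_cantor {X : Type*} [TopologicalSpace X] [PreconnectedSpace X] :
    ¬ Nonempty (X ≃ₜ (ℕ → Bool)) := fun ⟨e⟩ =>
  not_subsingleton (ℕ → Bool)
    (subsingleton_univ_iff.1 (e.range_coe ▸ isPreconnected_range e.continuous).subsingleton)

theorem Set.Finite.not_nonempty_homeomorph_cantor {X : Type*} [TopologicalSpace X] {s : Set X}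
    (hs : s.Finite) : ¬ Nonempty (s ≃ₜ (ℕ → Bool)) := fun ⟨e⟩ =>
  have := hs.to_subtype
  have := Finite.of_equiv s e.toEquiv
  _root_.not_finite (ℕ → Bool)

theorem CantorScheme.exists_forall_mem_res {β α : Type*} {A : List β → Set α}
    (hcover : ∀ l, A l ⊆ ⋃ b, A (b :: l)) {c : α} (hc : c ∈ A []) :
    ∃ x : ℕ → β, ∀ n, c ∈ A (res x n) := by
  choose f hf using fun l : {l // c ∈ A l} => mem_iUnion.1 (hcover l l.2)
  let L : ℕ → {l // c ∈ A l} := fun n => Nat.rec ⟨[], hc⟩ (fun _ l => ⟨f l :: l.1, hf l⟩) n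
  have hL : ∀ n, res (fun n => f (L n)) n = (L n).1 := by
    intro n
    induction n with
    | zero => rfl
    | succ n ih => rw [res_succ, ih]
  exact ⟨fun n => f (L n), fun n => hL n ▸ (L n).2⟩

section LinearOrder

variable {α : Type*} [LinearOrder α] [TopologicalSpace α] [OrderClosedTopology α]

theorem IsClosed.inter_Ioi_of_notMem {Q : Set α} (hQ : IsClosed Q) {m : α} (hm : m ∉ Q) :
    IsClosed (Q ∩ Ioi m) := by
  convert hQ.inter (isClosed_Ici (a := m)) using 1
  ext t
  simp only [mem_inter_iff, mem_Ioi, mem_Ici]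
  exact ⟨fun h => ⟨h.1, h.2.le⟩, fun h => ⟨h.1, h.2.lt_of_ne (ne_of_mem_of_not_mem h.1 hm).symm⟩⟩

theorem IsClosed.inter_Iio_of_notMem {Q : Set α} (hQ : IsClosed Q) {m : α} (hm : m ∉ Q) :
    IsClosed (Q ∩ Iio m) := by
  convert hQ.inter (isClosed_Iic (a := m)) using 1
  ext t
  simp only [mem_inter_iff, mem_Iio, mem_Iic]
  exact ⟨fun h => ⟨h.1, h.2.le⟩, fun h => ⟨h.1, h.2.lt_of_ne (ne_of_mem_of_not_mem h.1 hm)⟩⟩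

theorem Perfect.inter_cond {Q : Set α} (hQ : Perfect Q) {m : α} (hm : m ∉ Q) (b : Bool) :
    Perfect (Q ∩ cond b (Ioi m) (Iio m)) := by
  cases b
  · exact ⟨hQ.1.inter_Iio_of_notMem hm, inter_comm Q _ ▸ hQ.2.open_inter isOpen_Iio⟩
  · exact ⟨hQ.1.inter_Ioi_of_notMem hm, inter_comm Q _ ▸ hQ.2.open_inter isOpen_Ioi⟩

end LinearOrder

theorem Preperfect.sInf_lt_sSup {α : Type*} [ConditionallyCompleteLinearOrder α]
    [TopologicalSpace α] {Q : Set α} (hQ : Preperfect Q) (hne : Q.Nonempty) (hb : BddBelow Q)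
    (ha : BddAbove Q) : sInf Q < sSup Q := by
  obtain ⟨x, hx⟩ := hne
  obtain ⟨y, ⟨-, hy⟩, hyx⟩ := preperfect_iff_nhds.1 hQ x hx univ univ_mem
  rcases hyx.lt_or_gt with h | h
  · exact (csInf_le hb hy).trans_lt (h.trans_le (le_csSup ha hx))
  · exact (csInf_le hb hx).trans_lt (h.trans_le (le_csSup ha hy))

section GapScheme

variable (C : Set ℝ)

/-- Cutting `Q` at a point of `Cᶜ` in the middle half of `[sInf Q, sSup Q]` shrinks the convex
hull of either piece by a factor `3 / 4`. -/
def middleGap (Q : Set ℝ) : ℝ :=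
  Classical.epsilon fun m =>
    m ∉ C ∧ m ∈ Ioo ((3 * sInf Q + sSup Q) / 4) ((sInf Q + 3 * sSup Q) / 4)

def gapScheme : List Bool → Set ℝ
  | [] => C
  | b :: l =>
    gapScheme l ∩ cond b (Ioi (middleGap C (gapScheme l))) (Iio (middleGap C (gapScheme l)))

variable {C}

theorem middleGap_spec (hint : interior C = ∅) {Q : Set ℝ} (hQ : sInf Q < sSup Q) :
    middleGap C Q ∉ C ∧
      middleGap C Q ∈ Ioo ((3 * sInf Q + sSup Q) / 4) ((sInf Q + 3 * sSup Q) / 4) := by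
  refine Classical.epsilon_spec (p := fun m => m ∉ C ∧ m ∈ Ioo _ _) (not_forall_not.1 fun h => ?_)
  have hsub : Ioo ((3 * sInf Q + sSup Q) / 4) ((sInf Q + 3 * sSup Q) / 4) ⊆ interior C :=
    interior_maximal (fun m hm => not_not.1 fun hmC => h m ⟨hmC, hm⟩) isOpen_Ioo
  rw [hint, subset_empty_iff, Ioo_eq_empty_iff] at hsub
  exact hsub (by linarith)

theorem gapScheme_subset : ∀ l, gapScheme C l ⊆ C
  | [] => subset_rfl
  | _ :: l => inter_subset_left.trans (gapScheme_subset l)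

theorem isCompact_gapScheme (hC : IsCompact C) {l : List Bool} (hl : IsClosed (gapScheme C l)) :
    IsCompact (gapScheme C l) :=
  hC.of_isClosed_subset hl (gapScheme_subset l)

theorem gapScheme_disjoint : CantorScheme.Disjoint (gapScheme C) := by
  intro l a b hab
  cases a <;> cases b <;> first
    | exact absurd rfl hab
    | exact Ioi_disjoint_Iio_same.mono inter_subset_right inter_subset_right
    | exact (Ioi_disjoint_Iio_same.mono inter_subset_right inter_subset_right).symm

theorem gapScheme_cons (hC : IsCompact C) (hint : interior C = ∅) {l : List Bool}
    (hl : Perfect (gapScheme C l)) (hne : (gapScheme C l).Nonempty) (b : Bool) :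
    Perfect (gapScheme C (b :: l)) ∧ (gapScheme C (b :: l)).Nonempty ∧
      sSup (gapScheme C (b :: l)) - sInf (gapScheme C (b :: l)) ≤
        3 / 4 * (sSup (gapScheme C l) - sInf (gapScheme C l)) := by
  set Q := gapScheme C l
  have hQ : IsCompact Q := isCompact_gapScheme hC hl.1
  have hlt := hl.2.sInf_lt_sSup hne hQ.bddBelow hQ.bddAbove
  obtain ⟨hmC, hm₁, hm₂⟩ := middleGap_spec hint hlt
  have hmQ : middleGap C Q ∉ Q := fun h => hmC (gapScheme_subset l h)
  refine ⟨hl.inter_cond hmQ b, ?_⟩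
  cases b
  · have hne' : (Q ∩ Iio (middleGap C Q)).Nonempty :=
      ⟨sInf Q, hQ.sInf_mem hne, mem_Iio.2 (by linarith)⟩
    have h₁ : sSup (Q ∩ Iio (middleGap C Q)) ≤ middleGap C Q := csSup_le hne' fun t ht => ht.2.le
    have h₂ : sInf Q ≤ sInf (Q ∩ Iio (middleGap C Q)) :=
      csInf_le_csInf hQ.bddBelow hne' inter_subset_left
    exact ⟨hne', by simp only [gapScheme, cond]; linarith⟩
  · have hne' : (Q ∩ Ioi (middleGap C Q)).Nonempty :=
      ⟨sSup Q, hQ.sSup_mem hne, mem_Ioi.2 (by linarith)⟩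
    have h₁ : middleGap C Q ≤ sInf (Q ∩ Ioi (middleGap C Q)) := le_csInf hne' fun t ht => ht.2.le
    have h₂ : sSup (Q ∩ Ioi (middleGap C Q)) ≤ sSup Q :=
      csSup_le_csSup hQ.bddAbove hne' inter_subset_left
    exact ⟨hne', by simp only [gapScheme, cond]; linarith⟩

theorem gapScheme_spec (hC : IsCompact C) (hne : C.Nonempty) (hperf : Preperfect C)
    (hint : interior C = ∅) :
    ∀ l, Perfect (gapScheme C l) ∧ (gapScheme C l).Nonempty ∧
      sSup (gapScheme C l) - sInf (gapScheme C l) ≤ (3 / 4) ^ l.length * (sSup C - sInf C)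
  | [] => ⟨⟨hC.isClosed, hperf⟩, hne, by simp [gapScheme]⟩
  | b :: l => by
    obtain ⟨hl, hne', hw⟩ := gapScheme_spec hC hne hperf hint l
    obtain ⟨hl', hne'', hw'⟩ := gapScheme_cons hC hint hl hne' b
    refine ⟨hl', hne'', hw'.trans ?_⟩
    rw [List.length_cons, pow_succ]
    nlinarith

theorem gapScheme_cover (hC : IsCompact C) (hint : interior C = ∅) {l : List Bool}
    (hl : Perfect (gapScheme C l)) (hne : (gapScheme C l).Nonempty) :
    gapScheme C l ⊆ ⋃ b, gapScheme C (b :: l) := by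
  intro t ht
  have hQ := isCompact_gapScheme hC hl.1
  have hmC := (middleGap_spec hint (hl.2.sInf_lt_sSup hne hQ.bddBelow hQ.bddAbove)).1
  rcases lt_trichotomy t (middleGap C (gapScheme C l)) with h | rfl | h
  · exact mem_iUnion.2 ⟨false, ht, h⟩
  · exact absurd (gapScheme_subset l ht) hmC
  · exact mem_iUnion.2 ⟨true, ht, h⟩

end GapScheme

theorem nonempty_homeomorph_cantor_of_subset_real {C : Set ℝ} (hne : C.Nonempty)
    (hC : IsCompact C) (hperf : Preperfect C) (hint : interior C = ∅) :
    Nonempty (C ≃ₜ (ℕ → Bool)) := by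
  have hA := gapScheme_spec hC hne hperf hint
  have hdiam : CantorScheme.VanishingDiam (gapScheme C) := by
    intro x
    have hbound : ∀ n, ediam (gapScheme C (res x n)) ≤
        ENNReal.ofReal ((3 / 4) ^ n * (sSup C - sInf C)) := by
      intro n
      rw [Real.ediam_eq (isCompact_gapScheme hC (hA _).1.1).isBounded]
      exact ENNReal.ofReal_le_ofReal (by simpa [res_length] using (hA (res x n)).2.2)
    have hlim : Tendsto (fun n : ℕ => ENNReal.ofReal ((3 / 4) ^ n * (sSup C - sInf C)))
        atTop (𝓝 0) := by
      simpa using ENNReal.tendsto_ofReal ((tendsto_pow_atTop_nhds_zero_of_lt_one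
        (by norm_num) (by norm_num)).mul_const (sSup C - sInf C))
    exact tendsto_of_tendsto_of_tendsto_of_le_of_le tendsto_const_nhds hlim (fun _ => zero_le)
      hbound
  have hdom : (CantorScheme.inducedMap (gapScheme C)).1 = univ :=
    (CantorScheme.Antitone.closureAntitone (fun _ _ => inter_subset_left)
      (fun l => (hA l).1.1)).map_of_vanishingDiam hdiam (fun l => (hA l).2.1)
  set φ : (ℕ → Bool) → ℝ :=
    fun x => (CantorScheme.inducedMap (gapScheme C)).2 ⟨x, hdom ▸ mem_univ x⟩
  have hφ : ∀ x n, φ x ∈ gapScheme C (res x n) := fun x n => CantorScheme.map_mem _ n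
  have hφinj : Injective φ := fun x y h =>
    congrArg Subtype.val (gapScheme_disjoint.map_injective h)
  have hφcont : Continuous φ := hdiam.map_continuous.comp (continuous_id.subtype_mk _)
  have hrange : range φ = C := by
    refine Subset.antisymm (range_subset_iff.2 fun x => hφ x 0) fun c hc => ?_
    obtain ⟨x, hx⟩ := CantorScheme.exists_forall_mem_res
      (fun l => gapScheme_cover hC hint (hA l).1 (hA l).2.1) hc
    refine ⟨x, not_not.1 fun h => ?_⟩
    obtain ⟨n, hn⟩ := hdiam.dist_lt _ (dist_pos.2 h) x
    exact lt_irrefl _ (hn _ (hφ x n) _ (hx n))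
  exact ⟨((hφcont.isClosedEmbedding hφinj).isEmbedding.toHomeomorph.trans
    (Homeomorph.setCongr hrange)).symm⟩

namespace UnitAddCircle

theorem coe_image_closedBall (x r : ℝ) :
    ((↑) : ℝ → T1) '' closedBall x r = closedBall (x : T1) r := by
  ext u
  constructor
  · rintro ⟨t, ht, rfl⟩
    rw [← mem_preimage, AddCircle.coe_real_preimage_closedBall_eq_iUnion]
    exact mem_iUnion.2 ⟨0, by simpa using ht⟩
  · intro hu
    obtain ⟨t, rfl⟩ := QuotientAddGroup.mk_surjective u
    rw [← mem_preimage, AddCircle.coe_real_preimage_closedBall_eq_iUnion] at hu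
    obtain ⟨z, hz⟩ := mem_iUnion.1 hu
    refine ⟨t - z, ?_, by simp⟩
    rw [mem_closedBall, Real.dist_eq] at hz ⊢
    simpa [sub_sub, add_comm] using hz

theorem isPreconnected_closedBall (u : T1) (r : ℝ) : IsPreconnected (closedBall u r) := by
  obtain ⟨x, rfl⟩ := QuotientAddGroup.mk_surjective u
  rw [← coe_image_closedBall]
  exact (convex_closedBall x r).isPreconnected.image _ (AddCircle.continuous_mk' 1).continuousOn

instance : Infinite T1 :=
  have : Infinite (Ico (0 : ℝ) (0 + 1)) := (Ico_infinite (by norm_num)).to_subtype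
  Infinite.of_injective _ (AddCircle.equivIco 1 0).symm.injective

instance : LocallyConnectedSpace T1 :=
  locallyConnectedSpace_of_connected_bases _ _ (fun _ => nhds_basis_closedBall)
    (fun u r _ => isPreconnected_closedBall u r)

theorem exists_openPartialHomeomorph_coe {S : Set T1} (hS : S ≠ univ) :
    ∃ e : OpenPartialHomeomorph ℝ T1, ⇑e = ((↑) : ℝ → T1) ∧
      Bornology.IsBounded e.source ∧ S ⊆ e.target := by
  obtain ⟨z, hz⟩ := (ne_univ_iff_exists_notMem S).1 hS
  obtain ⟨a, rfl⟩ := QuotientAddGroup.mk_surjective z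
  refine ⟨AddCircle.openPartialHomeomorphCoe 1 a, rfl, Metric.isBounded_Ioo _ _, ?_⟩
  rintro u hu rfl
  exact hz hu

theorem finite_frontier_of_isPreconnected {J : Set T1} (hJ : IsPreconnected J) :
    (frontier J).Finite := by
  rcases J.eq_empty_or_nonempty with rfl | hne
  · simp
  by_cases huniv : J = univ
  · simp [huniv]
  obtain ⟨e, he, hbdd, hJt⟩ := exists_openPartialHomeomorph_coe huniv
  have hJr : IsConnected (e.symm '' J) :=
    ⟨hne.image _, hJ.image _ (e.continuousOn_symm.mono hJt)⟩
  have hJrb : Bornology.IsBounded (e.symm '' J) :=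
    hbdd.subset (image_subset_iff.2 fun u hu => e.map_target (hJt hu))
  have himg : (↑) '' (e.symm '' J) = J := he ▸ e.image_symm_image_of_subset_target hJt
  set a := sInf (e.symm '' J)
  set b := sSup (e.symm '' J)
  have hclosure : closure J ⊆ (↑) '' Icc a b := by
    refine closure_minimal ?_ (isCompact_Icc.image (AddCircle.continuous_mk' 1)).isClosed
    rw [← himg]
    exact image_mono (subset_Icc_csInf_csSup hJrb.bddBelow hJrb.bddAbove)
  have hinterior : (↑) '' Ioo a b ⊆ interior J := by
    refine interior_maximal ?_ (QuotientAddGroup.isOpenMap_coe _ isOpen_Ioo)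
    rw [← himg]
    exact image_mono (hJr.Ioo_csInf_csSup_subset hJrb.bddBelow hJrb.bddAbove)
  refine (Set.toFinite {(a : T1), (b : T1)}).subset ?_
  rintro _ ⟨hcl, hint⟩
  obtain ⟨t, ⟨hat, htb⟩, rfl⟩ := hclosure hcl
  rcases hat.eq_or_lt with rfl | hat
  · exact Or.inl rfl
  rcases htb.eq_or_lt with rfl | htb
  · exact Or.inr rfl
  exact absurd (hinterior ⟨t, ⟨hat, htb⟩, rfl⟩) hint

theorem nonempty_homeomorph_cantor {K : Set T1} (hne : K.Nonempty) (hK : IsClosed K)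
    (hperf : Preperfect K) (hint : interior K = ∅) : Nonempty (K ≃ₜ (ℕ → Bool)) := by
  have huniv : K ≠ univ := by
    rintro rfl
    simp at hint
  obtain ⟨e, -, -, hKt⟩ := exists_openPartialHomeomorph_coe huniv
  have hKs : K ⊆ e.symm.source := hKt
  obtain ⟨f⟩ := nonempty_homeomorph_cantor_of_subset_real (hne.image e.symm)
    (hK.isCompact.image_of_continuousOn (e.continuousOn_symm.mono hKt))
    (hperf.image_of_injOn (fun x hx => e.symm.continuousAt (hKs hx)) (e.symm.injOn.mono hKs))
    (by rw [e.symm_image_eq_source_inter_preimage hKt, interior_inter,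
      e.open_source.interior_eq, ← e.preimage_interior, hint, preimage_empty, inter_empty])
  exact ⟨(e.symm.homeomorphOfImageSubsetSource hKs rfl).trans f⟩

theorem finite_connectedComponentIn_compl {K N : Set T1} (hK : IsClosed K) (hN : IsCompact N)
    (hNK : Disjoint N K) : ((connectedComponentIn Kᶜ) '' N).Finite := by
  obtain ⟨δ, hδ, hdisj⟩ := hNK.exists_thickenings hN hK
  have hball : ∀ p ∈ N, closedBall p (δ / 2) ⊆ connectedComponentIn Kᶜ p := by
    intro p hp
    refine (isPreconnected_closedBall p _).subset_connectedComponentIn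
      (mem_closedBall_self (by positivity)) fun x hx hxK => hdisj.ne_of_mem ?_
      (self_subset_thickening hδ K hxK) rfl
    exact mem_thickening_iff.2 ⟨p, hp, (mem_closedBall.1 hx).trans_lt (half_lt_self hδ)⟩
  set 𝒥 := (connectedComponentIn Kᶜ) '' N
  have hpos : (0 : ENNReal) < ENNReal.ofReal (min 1 δ) := ENNReal.ofReal_pos.2 (lt_min one_pos hδ)
  have hlarge : {J : 𝒥 | ENNReal.ofReal (min 1 δ) ≤ volume (J : Set T1)} = univ := by
    refine eq_univ_of_forall fun ⟨_, p, hp, rfl⟩ => ?_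
    calc ENNReal.ofReal (min 1 δ) = volume (closedBall p (δ / 2)) := by
          rw [AddCircle.volume_closedBall]; ring_nf
      _ ≤ volume (connectedComponentIn Kᶜ p) := measure_mono (hball p hp)
  have hdisjoint : Pairwise (Disjoint on fun J : 𝒥 => (J : Set T1)) := by
    intro J₁ J₂ hJ
    refine Set.disjoint_left.2 fun z (hz₁ : z ∈ (J₁ : Set T1)) (hz₂ : z ∈ (J₂ : Set T1)) => hJ ?_
    obtain ⟨p, -, hp⟩ := J₁.2
    obtain ⟨q, -, hq⟩ := J₂.2
    rw [← hp] at hz₁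
    rw [← hq] at hz₂
    rw [Subtype.ext_iff, ← hp, ← hq, connectedComponentIn_eq hz₁, connectedComponentIn_eq hz₂]
  have hmeas : ∀ J : 𝒥, MeasurableSet (J : Set T1) := fun ⟨_, _, _, rfl⟩ =>
    hK.isOpen_compl.connectedComponentIn.measurableSet
  have := Measure.finite_const_le_meas_of_disjoint_iUnion volume hpos hmeas hdisjoint
    (measure_ne_top _ _)
  rw [hlarge, finite_univ_iff] at this
  exact toFinite 𝒥

end UnitAddCircle

section MinimalSets

variable {G}

theorem InvariantSet.smul_set_eq {S : Set T1} (hS : InvariantSet G S) (g : G) : g • S = S :=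
  Subset.antisymm (smul_set_subset_iff.2 fun x hx => hS g x hx)
    fun x hx => ⟨g⁻¹ • x, hS g⁻¹ x hx, smul_inv_smul g x⟩

theorem invariantSet_orbit (x : T1) : InvariantSet G (MulAction.orbit G x) :=
  fun g _ hy => MulAction.mem_orbit_of_mem_orbit g hy

theorem InvariantSet.inter {S S' : Set T1} (hS : InvariantSet G S) (hS' : InvariantSet G S') :
    InvariantSet G (S ∩ S') :=
  fun g x hx => ⟨hS g x hx.1, hS' g x hx.2⟩

theorem InvariantSet.compl {S : Set T1} (hS : InvariantSet G S) : InvariantSet G Sᶜ :=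
  fun g x hx hgx => hx (inv_smul_smul g x ▸ hS g⁻¹ _ hgx)

theorem exists_isMinimalSet_subset {S : Set T1} (hne : S.Nonempty) (hcl : IsClosed S)
    (hinv : InvariantSet G S) : ∃ K ⊆ S, IsMinimalSet G K := by
  set 𝒮 := {Z : Set T1 | Z.Nonempty ∧ IsClosed Z ∧ InvariantSet G Z}
  have hchain : ∀ c ⊆ 𝒮, IsChain (· ⊆ ·) c → c.Nonempty → ∃ lb ∈ 𝒮, ∀ Z ∈ c, lb ⊆ Z := by
    intro c hc hchain hcne
    have : Nonempty c := hcne.to_subtype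
    refine ⟨⋂ Z : c, (Z : Set T1), ⟨?_, isClosed_iInter fun Z => (hc Z.2).2.1,
      fun g x hx => mem_iInter.2 fun Z => (hc Z.2).2.2 g x (mem_iInter.1 hx Z)⟩,
      fun Z hZ => iInter_subset_of_subset ⟨Z, hZ⟩ subset_rfl⟩
    have hdir : Directed (· ⊇ ·) fun Z : c => (Z : Set T1) := fun Z₁ Z₂ =>
      (hchain.total Z₁.2 Z₂.2).elim (fun h => ⟨Z₁, subset_rfl, h⟩) fun h => ⟨Z₂, h, subset_rfl⟩
    exact IsCompact.nonempty_iInter_of_directed_nonempty_isCompact_isClosed _ hdir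
      (fun Z => (hc Z.2).1)
      (fun Z => (hc Z.2).2.1.isCompact) (fun Z => (hc Z.2).2.1)
  obtain ⟨K, hKS, hK⟩ := zorn_superset_nonempty 𝒮 hchain S ⟨hne, hcl, hinv⟩
  exact ⟨K, hKS, hK.prop.1, hK.prop.2.1, hK.prop.2.2,
    fun Z hZ hZcl hZinv hZK => hZK.antisymm (hK.2 ⟨hZ, hZcl, hZinv⟩ hZK)⟩

theorem IsMinimalSet.eq_of_inter_nonempty {K N : Set T1} (hK : IsMinimalSet G K)
    (hN : IsMinimalSet G N) (h : (K ∩ N).Nonempty) : K = N := by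
  have hcl := hK.2.1.inter hN.2.1
  have hinv := hK.2.2.1.inter hN.2.2.1
  exact (hK.2.2.2 _ h hcl hinv inter_subset_left).symm.trans
    (hN.2.2.2 _ h hcl hinv inter_subset_right)

theorem IsMinimalSet.orbit_infinite (h : IsMinimalSet G univ) (x : T1) :
    (MulAction.orbit G x).Infinite := fun hx => infinite_univ <|
  h.2.2.2 _ ⟨x, MulAction.mem_orbit_self x⟩ hx.isClosed (invariantSet_orbit x) (subset_univ _) ▸ hx

theorem IsMinimalSet.infinite {K : Set T1} (hK : IsMinimalSet G K)
    (horb : ∀ x : T1, (MulAction.orbit G x).Infinite) : K.Infinite := by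
  obtain ⟨x, hx⟩ := hK.1
  exact (horb x).mono (range_subset_iff.2 fun g => hK.2.2.1 g x hx)

variable [ContinuousConstSMul G T1]

theorem InvariantSet.frontier {S : Set T1} (hS : InvariantSet G S) :
    InvariantSet G (frontier S) := fun g x hx => by
  have h : g • _root_.frontier S = _root_.frontier (g • S) :=
    (Homeomorph.smul g).image_frontier S
  rw [hS.smul_set_eq g] at h
  exact h ▸ smul_mem_smul_set hx

theorem InvariantSet.derivedSet {S : Set T1} (hS : InvariantSet G S) :
    InvariantSet G (derivedSet S) := fun g x hx => by
  rw [← hS.smul_set_eq g]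
  exact (continuous_const_smul g).image_derivedSet (MulAction.injective g) (mem_image_of_mem _ hx)

theorem InvariantSet.smul_connectedComponentIn {S : Set T1} (hS : InvariantSet G S) (g : G)
    {x : T1} (hx : x ∈ S) : g • connectedComponentIn S x = connectedComponentIn S (g • x) := by
  conv_rhs => rw [← hS.smul_set_eq g]
  exact (Homeomorph.smul g).image_connectedComponentIn hx

theorem IsMinimalSet.preperfect {K : Set T1} (hK : IsMinimalSet G K)
    (horb : ∀ x : T1, (MulAction.orbit G x).Infinite) : Preperfect K := by
  obtain ⟨x, hxK, hx⟩ := (hK.infinite horb).exists_accPt_of_subset_isCompact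
    hK.2.1.isCompact subset_rfl
  have h : K ∩ derivedSet K = K := hK.2.2.2 _ ⟨x, hxK, hx⟩
    (hK.2.1.inter (isClosed_derivedSet K)) (hK.2.2.1.inter hK.2.2.1.derivedSet) inter_subset_left
  exact preperfect_iff_subset_derivedSet.2 fun y hy => (h.symm ▸ hy : y ∈ K ∩ derivedSet K).2

theorem IsMinimalSet.interior_eq_empty {K : Set T1} (hK : IsMinimalSet G K) (hKu : K ≠ univ) :
    interior K = ∅ := by
  have h := hK.2.2.2 _ (nonempty_frontier_iff.2 ⟨hK.1, hKu⟩) isClosed_frontier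
    hK.2.2.1.frontier hK.2.1.frontier_subset
  rw [hK.2.1.frontier_eq] at h
  exact eq_empty_of_forall_notMem fun x hx => (h.symm ▸ interior_subset hx).2 hx

theorem IsMinimalSet.eq_of_orbit_infinite {K N : Set T1}
    (hK : IsMinimalSet G K) (horb : ∀ x : T1, (MulAction.orbit G x).Infinite)
    (hN : IsMinimalSet G N) : N = K := by
  by_contra hNK
  have hdisj : Disjoint N K := by
    rw [disjoint_iff_inter_eq_empty, ← not_nonempty_iff_eq_empty]
    exact fun h => hNK (hN.eq_of_inter_nonempty hK h)
  set 𝒥 := connectedComponentIn Kᶜ '' N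
  have h𝒥 : 𝒥.Finite :=
    UnitAddCircle.finite_connectedComponentIn_compl hK.2.1 hN.2.1.isCompact hdisj
  have hV : InvariantSet G (⋃₀ 𝒥) := by
    rintro g x ⟨_, ⟨p, hp, rfl⟩, hx⟩
    refine ⟨_, ⟨g • p, hN.2.2.1 g p hp, rfl⟩, ?_⟩
    rw [← hK.2.2.1.compl.smul_connectedComponentIn g (hdisj.notMem_of_mem_left hp)]
    exact smul_mem_smul_set hx
  obtain ⟨p, hp⟩ := hN.1
  have hVne : (⋃₀ 𝒥).Nonempty :=
    ⟨p, _, mem_image_of_mem _ hp, mem_connectedComponentIn (hdisj.notMem_of_mem_left hp)⟩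
  have hVu : ⋃₀ 𝒥 ≠ univ := by
    obtain ⟨k, hk⟩ := hK.1
    refine fun h => ?_
    obtain ⟨_, ⟨q, -, rfl⟩, hkq⟩ := h.symm ▸ mem_univ k
    exact connectedComponentIn_subset _ _ hkq hk
  have hfr : frontier (⋃₀ 𝒥) ⊆ ⋃ J ∈ 𝒥, frontier J := h𝒥.frontier_sUnion_subset
  have hfrK : ⋃ J ∈ 𝒥, frontier J ⊆ K := iUnion₂_subset <| forall_mem_image.2 fun q _ =>
    (frontier_connectedComponentIn_subset hK.2.1.isOpen_compl q).trans (compl_compl K).subset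
  have heq : frontier (⋃₀ 𝒥) = K := hK.2.2.2 _ (nonempty_frontier_iff.2 ⟨hVne, hVu⟩)
    isClosed_frontier hV.frontier (hfr.trans hfrK)
  refine hK.infinite horb ((h𝒥.biUnion fun J hJ => ?_).subset (heq ▸ hfr))
  obtain ⟨q, -, rfl⟩ := hJ
  exact UnitAddCircle.finite_frontier_of_isPreconnected isPreconnected_connectedComponentIn

end MinimalSets

theorem statement0_general (G : Type*) [Group G] [MulAction G T1]
    (hor : OrientationPreservingAction G) :
    ((∃ x : T1, (MulAction.orbit G x).Finite) ∧
        ¬ IsMinimalSet G (Set.univ : Set T1) ∧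
        ¬ ((∃! Y : Set T1, IsMinimalSet G Y) ∧
            ∀ Y : Set T1, IsMinimalSet G Y → Nonempty (Y ≃ₜ (ℕ → Bool)))) ∨
      ((¬ ∃ x : T1, (MulAction.orbit G x).Finite) ∧
        IsMinimalSet G (Set.univ : Set T1) ∧
        ¬ ((∃! Y : Set T1, IsMinimalSet G Y) ∧
            ∀ Y : Set T1, IsMinimalSet G Y → Nonempty (Y ≃ₜ (ℕ → Bool)))) ∨
      ((¬ ∃ x : T1, (MulAction.orbit G x).Finite) ∧
        ¬ IsMinimalSet G (Set.univ : Set T1) ∧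
        ((∃! Y : Set T1, IsMinimalSet G Y) ∧
          ∀ Y : Set T1, IsMinimalSet G Y → Nonempty (Y ≃ₜ (ℕ → Bool)))) := by
  have : ContinuousConstSMul G T1 := ⟨hor.1⟩
  by_cases hfin : ∃ x : T1, (MulAction.orbit G x).Finite
  · obtain ⟨x, hx⟩ := hfin
    obtain ⟨Y, hYx, hY⟩ := exists_isMinimalSet_subset ⟨x, MulAction.mem_orbit_self x⟩
      hx.isClosed (invariantSet_orbit x)
    exact Or.inl ⟨⟨x, hx⟩, fun hmin => hmin.orbit_infinite x hx,
      fun ⟨_, hcantor⟩ => (hx.subset hYx).not_nonempty_homeomorph_cantor (hcantor Y hY)⟩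
  have horb : ∀ x : T1, (MulAction.orbit G x).Infinite := not_exists.1 hfin
  by_cases hmin : IsMinimalSet G univ
  · refine Or.inr (Or.inl ⟨hfin, hmin, fun ⟨_, hcantor⟩ => ?_⟩)
    have : PreconnectedSpace (univ : Set T1) := Subtype.preconnectedSpace isPreconnected_univ
    exact not_nonempty_homeomorph_cantor (hcantor univ hmin)
  obtain ⟨K, -, hK⟩ := exists_isMinimalSet_subset (G := G) univ_nonempty isClosed_univ
    (fun _ _ _ => mem_univ _)
  have hKu : K ≠ univ := fun h => hmin (h ▸ hK)
  refine Or.inr (Or.inr ⟨hfin, hmin, ⟨K, hK, fun N hN => hK.eq_of_orbit_infinite horb hN⟩,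
    fun N hN => ?_⟩)
  rw [hK.eq_of_orbit_infinite horb hN]
  exact UnitAddCircle.nonempty_homeomorph_cantor hK.1 hK.2.1 (hK.preperfect horb)
    (hK.interior_eq_empty hKu)

/-- Ghys, Prop. 5.6: an orientation-preserving action of a countable
discrete group on the circle satisfies exactly one of: (1) a finite orbit exists;
(2) the action is minimal; (3) there is a unique minimal set, homeomorphic to the
Cantor set (here `ℕ → Bool` with the product topology). -/
theorem statement0 (G : Type*) [Group G] [Countable G] [MulAction G T1]
    (hor : OrientationPreservingAction G) :
    ((∃ x : T1, (MulAction.orbit G x).Finite) ∧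
        ¬ IsMinimalSet G (Set.univ : Set T1) ∧
        ¬ ((∃! Y : Set T1, IsMinimalSet G Y) ∧
            ∀ Y : Set T1, IsMinimalSet G Y → Nonempty (Y ≃ₜ (ℕ → Bool)))) ∨
      ((¬ ∃ x : T1, (MulAction.orbit G x).Finite) ∧
        IsMinimalSet G (Set.univ : Set T1) ∧
        ¬ ((∃! Y : Set T1, IsMinimalSet G Y) ∧
            ∀ Y : Set T1, IsMinimalSet G Y → Nonempty (Y ≃ₜ (ℕ → Bool)))) ∨
      ((¬ ∃ x : T1, (MulAction.orbit G x).Finite) ∧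
        ¬ IsMinimalSet G (Set.univ : Set T1) ∧
        ((∃! Y : Set T1, IsMinimalSet G Y) ∧
          ∀ Y : Set T1, IsMinimalSet G Y → Nonempty (Y ≃ₜ (ℕ → Bool)))) :=
  statement0_general G hor
end
end

section
/- Let G be a discrete amenable group acting on the circle by orientation-preserving homeomorphisms. Then the rotation number map ρ : G → ℝ/ℤ is a group homomorphism. -/
/-!
For a lift `F` of the action of `g`, the translation number `τ F` equals the `μ`-average over
`k ∈ G` of the displacement `F x - x` at the orbit point `x = k • 0`. Indeed, the displacement
is a cocycle, `(F₁ ∘ F₂) x - x = (F₁ (F₂ x) - F₂ x) + (F₂ x - x)`, so by invariance of `μ` the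
average is additive in `F`; hence the average for `Fⁿ` is `n` times the one for `F`, while it stays
within `1` of `τ (Fⁿ) = n τ F`. Therefore `τ (F₁ ∘ F₂) = τ F₁ + τ F₂`, and `ρ` is `τ` mod `ℤ`.
The average of a bounded function against the finitely additive mean `μ` is the layer-cake
integral `a + ∫_a^b μ{f > t} dt`; it is additive because one summand can be approximated
uniformly by functions with finitely many values, on whose fibres the sum is a translate.
-/

open MeasureTheory Topology Filter Set Function

noncomputable section

variable (G : Type*) [Group G] [MulAction G T1]

/-- A left-invariant finitely additive probability mean on subsets of `G`;
its existence is one of the standard characterisations of amenability of a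
discrete group. -/
structure InvariantMean (G : Type*) [Group G] where
  m : Set G → ℝ
  nonneg : ∀ S : Set G, 0 ≤ m S
  total : m Set.univ = 1
  additive : ∀ S T : Set G, Disjoint S T → m (S ∪ T) = m S + m T
  invariant : ∀ (g : G) (S : Set G), m ((fun h => g * h) '' S) = m S

theorem exists_finite_valued_le_lt_add {ι : Type*} {g : ι → ℝ} {c d : ℝ}
    (hg : ∀ k, g k ∈ Icc c d) {ε : ℝ} (hε : 0 < ε) :
    ∃ (s : ι → ℝ) (R : Finset ℝ), (∀ k, s k ∈ R) ∧ (∀ k, s k ≤ g k) ∧ ∀ k, g k < s k + ε := by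
  refine ⟨fun k => ⌊g k / ε⌋ * ε, (Finset.Icc ⌊c / ε⌋ ⌊d / ε⌋).image (fun n : ℤ => n * ε),
    fun k => Finset.mem_image_of_mem _ <| Finset.mem_Icc.2
      ⟨Int.floor_mono (div_le_div_of_nonneg_right (hg k).1 hε.le),
        Int.floor_mono (div_le_div_of_nonneg_right (hg k).2 hε.le)⟩,
    fun k => (le_div_iff₀ hε).1 (Int.floor_le _), fun k => ?_⟩
  have := (div_lt_iff₀ hε).1 (Int.lt_floor_add_one (g k / ε))
  linarith

namespace InvariantMean

variable {H : Type*} [Group H] (μ : InvariantMean H)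

theorem m_empty : μ.m ∅ = 0 := by
  simpa using μ.additive ∅ ∅ (disjoint_bot_left)

theorem m_mono {S T : Set H} (h : S ⊆ T) : μ.m S ≤ μ.m T := by
  have := μ.additive S (T \ S) disjoint_sdiff_right
  rw [union_sdiff_cancel h] at this
  linarith [μ.nonneg (T \ S)]

theorem m_preimage_mul_left (h : H) (S : Set H) : μ.m ((h * ·) ⁻¹' S) = μ.m S := by
  rw [← image_mul_left', μ.invariant]

theorem m_biUnion_finset {ι : Type*} (s : Finset ι) {A : ι → Set H}
    (hA : (s : Set ι).PairwiseDisjoint A) : μ.m (⋃ i ∈ s, A i) = ∑ i ∈ s, μ.m (A i) := by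
  classical
  induction s using Finset.induction_on with
  | empty => simpa using μ.m_empty
  | insert a s ha ih =>
    rw [Finset.coe_insert, pairwiseDisjoint_insert_of_notMem (by simpa using ha)] at hA
    rw [Finset.set_biUnion_insert, Finset.sum_insert ha, μ.additive, ih hA.1]
    exact disjoint_iUnion₂_right.2 fun i hi => hA.2 i hi

/-- The layer-cake formula for the integral over `A`; it computes the integral of `f` against `μ`
restricted to `A` whenever the window `[a, b]` contains `f '' A`. -/
def layerCake (A : Set H) (a b : ℝ) (f : H → ℝ) : ℝ :=
  a * μ.m A + ∫ t in a..b, μ.m ({k | t < f k} ∩ A)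

theorem antitone_m_superlevel (A : Set H) (f : H → ℝ) :
    Antitone fun t => μ.m ({k | t < f k} ∩ A) :=
  fun _ _ hst => μ.m_mono fun _ hk => ⟨hst.trans_lt hk.1, hk.2⟩

theorem intervalIntegrable_m_superlevel (A : Set H) (f : H → ℝ) (a b : ℝ) :
    IntervalIntegrable (fun t => μ.m ({k | t < f k} ∩ A)) volume a b :=
  (μ.antitone_m_superlevel A f).intervalIntegrable

variable {μ}

theorem layerCake_extend {A : Set H} {f : H → ℝ} {a b a' b' : ℝ} (hf : ∀ k ∈ A, f k ∈ Icc a b)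
    (ha : a' ≤ a) (hb : b ≤ b') : μ.layerCake A a' b' f = μ.layerCake A a b f := by
  have below : ∫ t in a'..a, μ.m ({k | t < f k} ∩ A) = ∫ _ in a'..a, μ.m A := by
    refine intervalIntegral.integral_congr_uIoo fun t ht => ?_
    rw [uIoo_of_le ha] at ht
    congr 1
    exact inter_eq_right.2 fun k hk => ht.2.trans_le (hf k hk).1
  have above : ∫ t in b..b', μ.m ({k | t < f k} ∩ A) = ∫ _ in b..b', (0 : ℝ) := by
    refine intervalIntegral.integral_congr_uIoo fun t ht => ?_
    rw [uIoo_of_le hb] at ht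
    rw [← μ.m_empty]
    congr 1
    exact eq_empty_of_forall_notMem fun k hk => (hf k hk.2).2.not_gt (ht.1.trans hk.1)
  have split := intervalIntegral.integral_add_adjacent_intervals
    (μ.intervalIntegrable_m_superlevel A f a' a) (μ.intervalIntegrable_m_superlevel A f a b)
  rw [layerCake, layerCake, ← intervalIntegral.integral_add_adjacent_intervals
    ((μ.intervalIntegrable_m_superlevel A f a' a).trans
      (μ.intervalIntegrable_m_superlevel A f a b)) (μ.intervalIntegrable_m_superlevel A f b b'),
    ← split, below, above]
  simp only [intervalIntegral.integral_const, smul_eq_mul]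
  ring

theorem layerCake_eq_layerCake {A : Set H} {f : H → ℝ} {a b a' b' : ℝ}
    (hf : ∀ k ∈ A, f k ∈ Icc a b) (hf' : ∀ k ∈ A, f k ∈ Icc a' b') :
    μ.layerCake A a b f = μ.layerCake A a' b' f := by
  rw [← layerCake_extend hf (min_le_left a a') (le_max_left b b'),
    ← layerCake_extend hf' (min_le_right a a') (le_max_right b b')]

theorem layerCake_biUnion {ι : Type*} (s : Finset ι) {A : ι → Set H}
    (hA : (s : Set ι).PairwiseDisjoint A) (a b : ℝ) (f : H → ℝ) :
    μ.layerCake (⋃ i ∈ s, A i) a b f = ∑ i ∈ s, μ.layerCake (A i) a b f := by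
  have hsplit (t : ℝ) :
      μ.m ({k | t < f k} ∩ ⋃ i ∈ s, A i) = ∑ i ∈ s, μ.m ({k | t < f k} ∩ A i) := by
    rw [inter_iUnion₂, μ.m_biUnion_finset s (hA.mono fun i => inter_subset_right)]
  simp only [layerCake, hsplit, μ.m_biUnion_finset s hA, Finset.mul_sum, Finset.sum_add_distrib,
    intervalIntegral.integral_finsetSum fun i _ => μ.intervalIntegrable_m_superlevel (A i) f a b]

theorem layerCake_congr {A : Set H} {f g : H → ℝ} (hfg : ∀ k ∈ A, f k = g k) (a b : ℝ) :
    μ.layerCake A a b f = μ.layerCake A a b g := by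
  have hset (t : ℝ) : {k | t < f k} ∩ A = {k | t < g k} ∩ A := by
    ext k
    simp +contextual [hfg k]
  simp only [layerCake, hset]

theorem layerCake_add_const (A : Set H) (a b c : ℝ) (f : H → ℝ) :
    μ.layerCake A (a + c) (b + c) (fun k => f k + c) = μ.layerCake A a b f + c * μ.m A := by
  have hset (t : ℝ) : {k | t < f k + c} = {k | t - c < f k} := by
    ext k
    simp [sub_lt_iff_lt_add]
  simp only [layerCake, hset,
    intervalIntegral.integral_comp_sub_right (fun t => μ.m ({k | t < f k} ∩ A)),
    add_sub_cancel_right]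
  ring

theorem layerCake_mono {A : Set H} {f g : H → ℝ} {a b : ℝ} (hab : a ≤ b)
    (hfg : ∀ k, f k ≤ g k) : μ.layerCake A a b f ≤ μ.layerCake A a b g := by
  unfold layerCake
  gcongr
  exact intervalIntegral.integral_mono_on hab (μ.intervalIntegrable_m_superlevel A f a b)
    (μ.intervalIntegrable_m_superlevel A g a b)
    fun t _ => μ.m_mono fun k hk => ⟨hk.1.trans_le (hfg k), hk.2⟩

theorem layerCake_const {A : Set H} {a b c : ℝ} (hc : c ∈ Icc a b) :
    μ.layerCake A a b (fun _ => c) = c * μ.m A := by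
  rw [layerCake_extend (a := c) (b := c) (fun _ _ => ⟨le_rfl, le_rfl⟩) hc.1 hc.2, layerCake,
    intervalIntegral.integral_same, add_zero]

theorem layerCake_comp_mul_left (h : H) (a b : ℝ) (f : H → ℝ) :
    μ.layerCake univ a b (fun k => f (h * k)) = μ.layerCake univ a b f := by
  have hset (t : ℝ) : {k | t < f (h * k)} ∩ univ = (h * ·) ⁻¹' ({k | t < f k} ∩ univ) := by
    simp
  simp only [layerCake, hset, m_preimage_mul_left]

/-- On each fibre of `s` the sum `f + s` is a translate of `f`. -/
theorem layerCake_add_of_forall_mem_finset {f s : H → ℝ} {a b c d : ℝ}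
    (hf : ∀ k, f k ∈ Icc a b) (hs : ∀ k, s k ∈ Icc c d) {R : Finset ℝ} (hR : ∀ k, s k ∈ R) :
    μ.layerCake univ (a + c) (b + d) (fun k => f k + s k) =
      μ.layerCake univ a b f + ∑ y ∈ R, y * μ.m (s ⁻¹' {y}) := by
  have hcover : ⋃ y ∈ R, s ⁻¹' {y} = univ := by
    ext k
    simp [hR]
  have hdisj : (R : Set ℝ).PairwiseDisjoint fun y => s ⁻¹' {y} := pairwiseDisjoint_fiber s _
  have hfibre (y : ℝ) : μ.layerCake (s ⁻¹' {y}) (a + c) (b + d) (fun k => f k + s k) =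
      μ.layerCake (s ⁻¹' {y}) a b f + y * μ.m (s ⁻¹' {y}) := by
    rw [layerCake_congr (g := fun k => f k + y) (fun k hk => by rw [mem_preimage.1 hk]),
      layerCake_eq_layerCake (a' := a + y) (b' := b + y), layerCake_add_const]
    · intro k hk
      have := hs k
      rw [mem_preimage, mem_singleton_iff] at hk
      subst hk
      exact ⟨by linarith [(hf k).1, this.1], by linarith [(hf k).2, this.2]⟩
    · exact fun k _ => ⟨by linarith [(hf k).1], by linarith [(hf k).2]⟩
  rw [← hcover, layerCake_biUnion R hdisj, layerCake_biUnion R hdisj,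
    Finset.sum_congr rfl fun y _ => hfibre y, Finset.sum_add_distrib]

variable (μ) in
/-- Meaningful only for bounded `f`: for unbounded `f` the window `⨆ k, |f k|` is the junk value
`0`. -/
def integral (f : H → ℝ) : ℝ :=
  μ.layerCake univ (-⨆ k, |f k|) (⨆ k, |f k|) f

theorem integral_eq_layerCake {f : H → ℝ} {a b : ℝ} (hf : ∀ k, f k ∈ Icc a b) :
    μ.integral f = μ.layerCake univ a b f := by
  have hbdd : BddAbove (range fun k => |f k|) :=
    ⟨max |a| |b|, by rintro _ ⟨k, rfl⟩; exact abs_le_max_abs_abs (hf k).1 (hf k).2⟩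
  exact layerCake_eq_layerCake (fun k _ => abs_le.1 (le_ciSup hbdd k)) fun k _ => hf k

theorem integral_mono {f g : H → ℝ} {a b c d : ℝ} (hf : ∀ k, f k ∈ Icc a b)
    (hg : ∀ k, g k ∈ Icc c d) (hfg : ∀ k, f k ≤ g k) : μ.integral f ≤ μ.integral g := by
  have hf' (k : H) : f k ∈ Icc (min a c) (max b d) :=
    Icc_subset_Icc (min_le_left a c) (le_max_left b d) (hf k)
  have hg' (k : H) : g k ∈ Icc (min a c) (max b d) :=
    Icc_subset_Icc (min_le_right a c) (le_max_right b d) (hg k)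
  rw [integral_eq_layerCake hf', integral_eq_layerCake hg']
  exact layerCake_mono ((hf' 1).1.trans (hf' 1).2) hfg

theorem integral_const (c : ℝ) : μ.integral (fun _ => c) = c := by
  have hc : c ∈ Icc c c := ⟨le_rfl, le_rfl⟩
  rw [integral_eq_layerCake fun _ => hc, layerCake_const hc, μ.total, mul_one]

theorem integral_mem_Icc {f : H → ℝ} {a b : ℝ} (hf : ∀ k, f k ∈ Icc a b) :
    μ.integral f ∈ Icc a b := by
  have ha : ∀ _ : H, a ∈ Icc a a := fun _ => ⟨le_rfl, le_rfl⟩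
  have hb : ∀ _ : H, b ∈ Icc b b := fun _ => ⟨le_rfl, le_rfl⟩
  constructor
  · simpa only [integral_const] using integral_mono ha hf fun k => (hf k).1
  · simpa only [integral_const] using integral_mono hf hb fun k => (hf k).2

theorem integral_add_const {f : H → ℝ} {a b : ℝ} (hf : ∀ k, f k ∈ Icc a b) (c : ℝ) :
    μ.integral (fun k => f k + c) = μ.integral f + c := by
  rw [integral_eq_layerCake (a := a + c) (b := b + c)
      fun k => ⟨by linarith [(hf k).1], by linarith [(hf k).2]⟩,
    layerCake_add_const, μ.total, mul_one, integral_eq_layerCake hf]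

theorem integral_add_of_forall_mem_finset {f s : H → ℝ} {a b c d : ℝ} (hf : ∀ k, f k ∈ Icc a b)
    (hs : ∀ k, s k ∈ Icc c d) {R : Finset ℝ} (hR : ∀ k, s k ∈ R) :
    μ.integral (fun k => f k + s k) = μ.integral f + μ.integral s := by
  have hsum {f : H → ℝ} {a b : ℝ} (hf : ∀ k, f k ∈ Icc a b) :
      μ.integral (fun k => f k + s k) = μ.integral f + ∑ y ∈ R, y * μ.m (s ⁻¹' {y}) := by
    rw [integral_eq_layerCake fun k => add_mem_add (hf k) (hs k) |> Icc_add_Icc_subset _ _ _ _,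
      layerCake_add_of_forall_mem_finset hf hs hR, integral_eq_layerCake hf]
  have hzero : ∀ k : H, (0 : ℝ) ∈ Icc 0 0 := fun _ => ⟨le_rfl, le_rfl⟩
  have h0 := hsum hzero
  simp only [zero_add] at h0
  rw [hsum hf, h0, integral_eq_layerCake hzero, layerCake_const (hzero 1), zero_mul, zero_add]

theorem integral_comp_mul_left (h : H) (f : H → ℝ) :
    μ.integral (fun k => f (h * k)) = μ.integral f := by
  simp only [integral, (mul_left_surjective h).iSup_comp fun k => |f k|,
    layerCake_comp_mul_left]

theorem integral_add {f g : H → ℝ} {a b c d : ℝ} (hf : ∀ k, f k ∈ Icc a b)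
    (hg : ∀ k, g k ∈ Icc c d) :
    μ.integral (fun k => f k + g k) = μ.integral f + μ.integral g := by
  refine eq_of_forall_dist_le fun ε hε => ?_
  obtain ⟨s, R, hR, hs_le, hlt_s⟩ := exists_finite_valued_le_lt_add hg hε
  have hs (k : H) : s k ∈ Icc (c - ε) d :=
    ⟨by linarith [hlt_s k, (hg k).1], (hs_le k).trans (hg k).2⟩
  have hfg (k : H) : f k + g k ∈ Icc (a + c) (b + d) :=
    Icc_add_Icc_subset _ _ _ _ (add_mem_add (hf k) (hg k))
  have hfs (k : H) : f k + s k ∈ Icc (a + (c - ε)) (b + d) :=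
    Icc_add_Icc_subset _ _ _ _ (add_mem_add (hf k) (hs k))
  have hfs_ε (k : H) : f k + s k + ε ∈ Icc (a + (c - ε) + ε) (b + d + ε) :=
    ⟨add_le_add_left (hfs k).1 ε, add_le_add_left (hfs k).2 ε⟩
  have hs_ε (k : H) : s k + ε ∈ Icc (c - ε + ε) (d + ε) :=
    ⟨add_le_add_left (hs k).1 ε, add_le_add_left (hs k).2 ε⟩
  have hsplit := integral_add_of_forall_mem_finset (μ := μ) hf hs hR
  have h₁ : μ.integral (fun k => f k + g k) ≤ μ.integral (fun k => f k + s k) + ε := by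
    rw [← integral_add_const hfs]
    exact integral_mono hfg hfs_ε fun k => by linarith [hlt_s k]
  have h₂ : μ.integral (fun k => f k + s k) ≤ μ.integral (fun k => f k + g k) :=
    integral_mono hfs hfg fun k => by linarith [hs_le k]
  have h₃ : μ.integral s ≤ μ.integral g := integral_mono hs hg hs_le
  have h₄ : μ.integral g ≤ μ.integral s + ε := by
    rw [← integral_add_const hs]
    exact integral_mono hg hs_ε fun k => (hlt_s k).le
  rw [Real.dist_eq, abs_le]
  constructor <;> linarith

end InvariantMean

namespace CircleDeg1Lift

variable (f g : CircleDeg1Lift)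

theorem abs_map_sub_sub_translationNumber_lt (x : ℝ) : |f x - x - f.translationNumber| < 1 := by
  have upper := f.map_lt_add_translationNumber_add_one x
  have lower := f.lt_map_of_int_lt_translationNumber (n := ⌈f.translationNumber⌉ - 1)
    (by push_cast; linarith [Int.ceil_lt_add_one (f.translationNumber)]) x
  push_cast at lower
  rw [abs_lt]
  constructor <;> linarith [Int.le_ceil (f.translationNumber)]

def displacement : T1 → ℝ :=
  Function.Periodic.lift (f := fun x => f x - x) fun x => by
    simp only [map_add_one]
    ring

@[simp]
theorem displacement_coe (x : ℝ) : f.displacement x = f x - x := rfl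

theorem displacement_one : (1 : CircleDeg1Lift).displacement = fun _ => 0 := by
  ext y
  induction y using QuotientAddGroup.induction_on with
  | H x => simp

theorem displacement_mem_Icc (y : T1) :
    f.displacement y ∈ Icc (f.translationNumber - 1) (f.translationNumber + 1) := by
  induction y using QuotientAddGroup.induction_on with
  | H x =>
    have := f.abs_map_sub_sub_translationNumber_lt x
    rw [abs_lt] at this
    exact ⟨by simp only [displacement_coe]; linarith, by simp only [displacement_coe]; linarith⟩

theorem displacement_mul (x : ℝ) :
    (f * g).displacement x = f.displacement (g x) + g.displacement x := by
  simp only [displacement_coe, mul_apply]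
  ring

end CircleDeg1Lift

section MeanDisplacement

variable {Γ : Type*} [Group Γ] [MulAction Γ T1] (μ : InvariantMean Γ)

def meanDisplacement (f : CircleDeg1Lift) : ℝ :=
  μ.integral fun k : Γ => f.displacement (k • (0 : T1))

theorem abs_meanDisplacement_sub_translationNumber_le (f : CircleDeg1Lift) :
    |meanDisplacement μ f - f.translationNumber| ≤ 1 := by
  have : meanDisplacement μ f ∈ Icc (f.translationNumber - 1) (f.translationNumber + 1) :=
    μ.integral_mem_Icc fun k : Γ => f.displacement_mem_Icc (k • (0 : T1))
  rw [abs_le]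
  exact ⟨by linarith [this.1], by linarith [this.2]⟩

/-- The displacement is a cocycle over the action, and `μ` is invariant. -/
theorem meanDisplacement_mul {f g : CircleDeg1Lift} {γ : Γ}
    (hg : ∀ x : ℝ, (g x : T1) = γ • (x : T1)) :
    meanDisplacement μ (f * g) = meanDisplacement μ f + meanDisplacement μ g := by
  have hcocycle (k : Γ) : (f * g).displacement (k • (0 : T1)) =
      f.displacement ((γ * k) • (0 : T1)) + g.displacement (k • (0 : T1)) := by
    obtain ⟨x, hx⟩ := QuotientAddGroup.mk_surjective (k • (0 : T1))
    rw [← hx, CircleDeg1Lift.displacement_mul, hg, mul_smul, hx]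
  unfold meanDisplacement
  simp only [hcocycle]
  rw [μ.integral_add (f := fun k => f.displacement ((γ * k) • (0 : T1)))
      (fun k => f.displacement_mem_Icc _) fun k => g.displacement_mem_Icc _,
    μ.integral_comp_mul_left γ fun k => f.displacement (k • (0 : T1))]

theorem meanDisplacement_pow {f : CircleDeg1Lift} {γ : Γ}
    (hf : ∀ x : ℝ, (f x : T1) = γ • (x : T1)) (n : ℕ) :
    meanDisplacement μ (f ^ n) = n * meanDisplacement μ f := by
  induction n with
  | zero => simp [meanDisplacement, CircleDeg1Lift.displacement_one, μ.integral_const]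
  | succ n ih => rw [pow_succ, meanDisplacement_mul μ hf, ih]; push_cast; ring

theorem meanDisplacement_eq_translationNumber {f : CircleDeg1Lift} {γ : Γ}
    (hf : ∀ x : ℝ, (f x : T1) = γ • (x : T1)) : meanDisplacement μ f = f.translationNumber := by
  have hbound (n : ℕ) : n * |meanDisplacement μ f - f.translationNumber| ≤ 1 := by
    have := abs_meanDisplacement_sub_translationNumber_le μ (f ^ n)
    rwa [meanDisplacement_pow μ hf, CircleDeg1Lift.translationNumber_pow, ← mul_sub, abs_mul,
      Nat.abs_cast] at this
  by_contra hne
  have hpos : 0 < |meanDisplacement μ f - f.translationNumber| := abs_pos.2 (sub_ne_zero.2 hne)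
  obtain ⟨n, hn⟩ := exists_nat_gt (1 / |meanDisplacement μ f - f.translationNumber|)
  rw [div_lt_iff₀ hpos] at hn
  linarith [hbound n]

theorem translationNumber_mul_of_lift_smul (μ : InvariantMean Γ) {f g : CircleDeg1Lift} {γ δ : Γ}
    (hf : ∀ x : ℝ, (f x : T1) = γ • (x : T1)) (hg : ∀ x : ℝ, (g x : T1) = δ • (x : T1)) :
    (f * g).translationNumber = f.translationNumber + g.translationNumber := by
  have hfg (x : ℝ) : ((f * g) x : T1) = (γ * δ) • (x : T1) := by
    rw [CircleDeg1Lift.mul_apply, hf, hg, mul_smul]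
  rw [← meanDisplacement_eq_translationNumber μ hfg, meanDisplacement_mul μ hg,
    meanDisplacement_eq_translationNumber μ hf, meanDisplacement_eq_translationNumber μ hg]

end MeanDisplacement

namespace IsLiftOf

variable {F K : ℝ → ℝ} {f k : T1 → T1}

def toCircleDeg1Lift (hF : IsLiftOf F f) : CircleDeg1Lift :=
  ⟨⟨F, hF.2.1.monotone⟩, hF.2.2.1⟩

@[simp]
theorem coe_toCircleDeg1Lift (hF : IsLiftOf F f) : ⇑hF.toCircleDeg1Lift = F := rfl

theorem comp (hF : IsLiftOf F f) (hK : IsLiftOf K k) : IsLiftOf (F ∘ K) (f ∘ k) :=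
  ⟨hF.1.comp hK.1, hF.2.1.comp hK.2.1, fun x => by simp [hK.2.2.1, hF.2.2.1],
    fun x => by simp [hF.2.2.2, hK.2.2.2]⟩

theorem toCircleDeg1Lift_comp {k' : T1 → T1} (hF : IsLiftOf F f) (hK : IsLiftOf K k)
    (hFK : IsLiftOf (F ∘ K) k') :
    hFK.toCircleDeg1Lift = hF.toCircleDeg1Lift * hK.toCircleDeg1Lift :=
  CircleDeg1Lift.ext fun _ => rfl

/-- `F - K` is continuous with values in `ℤ`, hence constant. -/
theorem exists_int_eq_add (hF : IsLiftOf F f) (hK : IsLiftOf K f) :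
    ∃ n : ℤ, ∀ x, F x = K x + n := by
  have hint (x : ℝ) : ∃ n : ℤ, F x - K x = n := by
    have : ((F x : ℝ) : T1) = K x := (hF.2.2.2 x).trans (hK.2.2.2 x).symm
    obtain ⟨n, hn⟩ := AddSubgroup.mem_zmultiples_iff.1 (QuotientAddGroup.eq_iff_sub_mem.1 this)
    exact ⟨n, by simpa using hn.symm⟩
  choose n hn using hint
  have hcont : Continuous n := by
    rw [Int.isClosedEmbedding_coe_real.continuous_iff, Function.comp_def, ← funext hn]
    exact hF.1.sub hK.1
  refine ⟨n 0, fun x => ?_⟩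
  rw [← PreconnectedSpace.constant inferInstance hcont (x := x) (y := 0), ← hn x]
  ring

theorem coe_translationNumber_eq (hF : IsLiftOf F f) (hK : IsLiftOf K f) :
    (hF.toCircleDeg1Lift.translationNumber : T1) = hK.toCircleDeg1Lift.translationNumber := by
  obtain ⟨n, hn⟩ := hF.exists_int_eq_add hK
  have htranslate : hF.toCircleDeg1Lift =
      CircleDeg1Lift.translate (Multiplicative.ofAdd (n : ℝ)) * hK.toCircleDeg1Lift := by
    ext x
    simp [hn, add_comm]
  have hcomm : Commute (CircleDeg1Lift.translate (Multiplicative.ofAdd (n : ℝ)) : CircleDeg1Lift)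
      hK.toCircleDeg1Lift := by
    refine CircleDeg1Lift.commute_iff_commute.2 fun x => ?_
    simp [CircleDeg1Lift.map_int_add]
  rw [htranslate, CircleDeg1Lift.translationNumber_mul_of_commute hcomm,
    CircleDeg1Lift.translationNumber_translate]
  simp

end IsLiftOf

theorem HasRotationNumber.eq_coe_translationNumber {f : T1 → T1} {ρ : T1} {K : ℝ → ℝ}
    (h : HasRotationNumber f ρ) (hK : IsLiftOf K f) :
    ρ = hK.toCircleDeg1Lift.translationNumber := by
  obtain ⟨F, hF, hlim⟩ := h
  rw [← hF.coe_translationNumber_eq hK]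
  refine tendsto_nhds_unique (hlim 0) ?_
  have := ((AddCircle.continuous_mk' 1).tendsto _).comp
    hF.toCircleDeg1Lift.tendsto_translation_number₀
  simpa [Function.comp_def, CircleDeg1Lift.coe_pow] using this

theorem statement3_general (G : Type*) [Group G] [MulAction G T1]
    (hamen : Nonempty (InvariantMean G))
    (ρ : G → T1) (hρ : ∀ g : G, HasRotationNumber (fun x : T1 => g • x) (ρ g)) :
    ∀ g h : G, ρ (g * h) = ρ g + ρ h := by
  obtain ⟨μ⟩ := hamen
  intro g h
  obtain ⟨F, hF, -⟩ := hρ g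
  obtain ⟨K, hK, -⟩ := hρ h
  have hFK : IsLiftOf (F ∘ K) fun x : T1 => (g * h) • x := by
    simpa only [Function.comp_def, mul_smul] using hF.comp hK
  rw [(hρ (g * h)).eq_coe_translationNumber hFK, (hρ g).eq_coe_translationNumber hF,
    (hρ h).eq_coe_translationNumber hK, hF.toCircleDeg1Lift_comp hK hFK,
    translationNumber_mul_of_lift_smul μ hF.2.2.2 hK.2.2.2, AddCircle.coe_add]

/-- Ghys, Prop. 6.17: for an orientation-preserving action of a
discrete amenable group on the circle, the rotation number map is a group
homomorphism. -/
theorem statement3 (G : Type*) [Group G] [MulAction G T1]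
    (hamen : Nonempty (InvariantMean G))
    (hor : OrientationPreservingAction G)
    (ρ : G → T1) (hρ : ∀ g : G, HasRotationNumber (fun x : T1 => g • x) (ρ g)) :
    ∀ g h : G, ρ (g * h) = ρ g + ρ h :=
  statement3_general G hamen ρ hρ
end
end

section
/- Let G be a countably infinite discrete abelian group with a free Denjoy action on 𝕋 with unique minimal set Y. Then the restricted action of G on the open set 𝕋 \ Y is free and proper: for every compact K ⊆ 𝕋 \ Y, the set {g ∈ G : gK ∩ K ≠ ∅} is finite. -/
open MeasureTheory Topology Filter Set Function

noncomputable section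

variable (G : Type*) [Group G] [MulAction G T1]

/-!
Lift everything to `ℝ` and let `W ⊆ ℝ` be the preimage of `Y`. For `t ∉ W`, the point
`leftEnd W t = sup (W ∩ (-∞, t])` is the left endpoint of the gap of `W` containing `t`; it is
locally constant off `W`, so the compact set `K` meets only finitely many gaps, and their left
endpoints project to a finite set `P ⊆ 𝕋`. Lifts of the group elements are order isomorphisms of
`ℝ` preserving `W`, hence commute with `leftEnd W`. So every `g` with `gK ∩ K ≠ ∅` sends a point
of `P` into `P`, and by freeness only finitely many `g` do.
-/

section LeftEnd

variable {α : Type*} [ConditionallyCompleteLinearOrder α]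

def leftEnd (W : Set α) (t : α) : α := sSup (W ∩ Iic t)

theorem OrderIso.map_leftEnd (e : α ≃o α) {W : Set α} (hW : e ⁻¹' W = W) {t : α}
    (ht : (W ∩ Iic t).Nonempty) : e (leftEnd W t) = leftEnd W (e t) := by
  have himage : e '' (W ∩ Iic t) = W ∩ Iic (e t) := by
    rw [image_inter e.injective, e.image_Iic, ← hW, image_preimage_eq _ e.surjective, hW]
  rw [leftEnd, e.map_csSup' ht ⟨t, fun _ hs => hs.2⟩, himage, leftEnd]

theorem leftEnd_eq_of_mem_ordConnectedComponent {W : Set α} {s t : α}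
    (h : s ∈ ordConnectedComponent Wᶜ t) : leftEnd W s = leftEnd W t := by
  have hgap := mem_ordConnectedComponent.1 h
  suffices W ∩ Iic s = W ∩ Iic t by rw [leftEnd, this, leftEnd]
  ext w
  refine and_congr_right fun hw => ⟨fun hws => ?_, fun hwt => ?_⟩
  · exact not_lt.1 fun htw => hgap ⟨inf_le_left.trans htw.le, hws.trans le_sup_right⟩ hw
  · exact not_lt.1 fun hsw => hgap ⟨inf_le_right.trans hsw.le, hwt.trans le_sup_left⟩ hw

theorem eventually_leftEnd_eq [TopologicalSpace α] [OrderTopology α] {W : Set α}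
    (hW : IsClosed W) {t : α} (ht : t ∉ W) : ∀ᶠ s in 𝓝 t, leftEnd W s = leftEnd W t :=
  mem_of_superset (ordConnectedComponent_mem_nhds.2 (hW.isOpen_compl.mem_nhds ht))
    fun _ => leftEnd_eq_of_mem_ordConnectedComponent

end LeftEnd

theorem IsCompact.finite_image_of_eventually_eq {X Y : Type*} [TopologicalSpace X] {K : Set X}
    (hK : IsCompact K) {f : X → Y} (hf : ∀ x ∈ K, ∀ᶠ y in 𝓝 x, f y = f x) : (f '' K).Finite := by
  obtain ⟨s, -, hcover⟩ := hK.elim_nhds_subcover (fun x => {y | f y = f x}) hf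
  refine (s.finite_toSet.image f).subset ?_
  rintro _ ⟨y, hy, rfl⟩
  obtain ⟨x, hx, hyx⟩ := mem_iUnion₂.1 (hcover hy)
  exact ⟨x, hx, hyx.symm⟩

theorem finite_setOf_exists_smul_mem {G X : Type*} [Group G] [MulAction G X]
    (hfree : ∀ (g : G) (x : X), g • x = x → g = 1) {P : Set X} (hP : P.Finite) :
    {g : G | ∃ p ∈ P, g • p ∈ P}.Finite := by
  have hinj : ∀ p : X, Injective fun g : G => g • p := fun p g h (hgh : g • p = h • p) => by
    have : (h⁻¹ * g) • p = p := by rw [mul_smul, hgh, inv_smul_smul]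
    exact inv_mul_eq_one.1 (hfree _ _ this) |>.symm
  refine (hP.biUnion fun p _ => hP.preimage (hinj p).injOn).subset ?_
  rintro g ⟨p, hp, hgp⟩
  exact mem_biUnion hp hgp

theorem InvariantSet.preimage_smul {G : Type*} [Group G] [MulAction G T1] {Y : Set T1}
    (hY : InvariantSet G Y) (g : G) : (fun x : T1 => g • x) ⁻¹' Y = Y :=
  Subset.antisymm (fun x hx => by simpa using hY g⁻¹ _ hx) fun x hx => hY g x hx

theorem nonempty_coe_preimage_inter_Iic {Y : Set T1} (hY : Y.Nonempty) (t : ℝ) :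
    (((↑) : ℝ → T1) ⁻¹' Y ∩ Iic t).Nonempty := by
  obtain ⟨y, hy⟩ := hY
  induction y using QuotientAddGroup.induction_on with
  | H s => exact ⟨s + ⌊t - s⌋, by simpa using hy, mem_Iic.2 (by linarith [Int.floor_le (t - s)])⟩

theorem coe_leftEnd_fract {Y : Set T1} (hY : Y.Nonempty) (t : ℝ) :
    ((leftEnd (((↑) : ℝ → T1) ⁻¹' Y) (Int.fract t) : ℝ) : T1) =
      (leftEnd (((↑) : ℝ → T1) ⁻¹' Y) t : ℝ) := by
  have hshift := (OrderIso.addRight (⌊t⌋ : ℝ)).map_leftEnd (W := ((↑) : ℝ → T1) ⁻¹' Y)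
    (by ext; simp) (nonempty_coe_preimage_inter_Iic hY (Int.fract t))
  simp only [OrderIso.addRight_apply, Int.fract_add_floor] at hshift
  rw [← hshift]
  simp

theorem IsLiftOf.surjective {F : ℝ → ℝ} {f : T1 → T1} (hF : IsLiftOf F f) : Surjective F :=
  (CircleDeg1Lift.mk ⟨F, hF.2.1.monotone⟩ hF.2.2.1).continuous_iff_surjective.1 hF.1

theorem IsLiftOf.map_leftEnd {F : ℝ → ℝ} {f : T1 → T1} (hF : IsLiftOf F f) {Y : Set T1}
    (hf : f ⁻¹' Y = Y) (hY : Y.Nonempty) (t : ℝ) :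
    F (leftEnd (((↑) : ℝ → T1) ⁻¹' Y) t) = leftEnd (((↑) : ℝ → T1) ⁻¹' Y) (F t) := by
  refine (hF.2.1.orderIsoOfSurjective F hF.surjective).map_leftEnd ?_
    (nonempty_coe_preimage_inter_Iic hY t)
  ext x
  simp only [mem_preimage, StrictMono.coe_orderIsoOfSurjective, hF.2.2.2 x]
  rw [← mem_preimage (f := f), hf]

theorem statement7_general (G : Type*) [CommGroup G] [MulAction G T1]
    (hD : IsDenjoy G) (hfree : FreeAction G)
    (Y : Set T1) (hY : IsMinimalSet G Y) :
    (∀ (g : G), ∀ x ∈ Yᶜ, g • x = x → g = 1) ∧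
    ∀ K : Set T1, K ⊆ Yᶜ → IsCompact K →
      {g : G | ((fun x : T1 => g • x) '' K ∩ K).Nonempty}.Finite := by
  obtain ⟨hYne, hYclosed, hYinv, -⟩ := hY
  refine ⟨fun g x _ => hfree g x, fun K hKY hK => ?_⟩
  choose F hF using hD.1.2
  have hlift : ∀ (g : G) (x : ℝ), g • (x : T1) = (F g x : T1) := fun g x => ((hF g).2.2.2 x).symm
  set W : Set ℝ := ((↑) : ℝ → T1) ⁻¹' Y
  have hKlift : IsCompact (((↑) : ℝ → T1) ⁻¹' K ∩ Icc 0 1) :=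
    isCompact_Icc.inter_left (hK.isClosed.preimage (AddCircle.continuous_mk' 1))
  set P : Set T1 := ((↑) : ℝ → T1) '' (leftEnd W '' (((↑) : ℝ → T1) ⁻¹' K ∩ Icc 0 1))
  have hP : P.Finite := (hKlift.finite_image_of_eventually_eq fun _ ht =>
    eventually_leftEnd_eq (hYclosed.preimage (AddCircle.continuous_mk' 1)) (hKY ht.1)).image _
  have hmemP : ∀ t : ℝ, (t : T1) ∈ K → ((leftEnd W t : ℝ) : T1) ∈ P := fun t ht =>
    ⟨_, ⟨Int.fract t, ⟨by simpa using ht, Int.fract_nonneg t, (Int.fract_lt_one t).le⟩, rfl⟩,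
      coe_leftEnd_fract hYne t⟩
  refine (finite_setOf_exists_smul_mem hfree hP).subset ?_
  rintro g ⟨_, ⟨x, hxK, rfl⟩, hgxK⟩
  induction x using QuotientAddGroup.induction_on with
  | H t =>
    refine ⟨_, hmemP t hxK, ?_⟩
    rw [hlift, (hF g).map_leftEnd (hYinv.preimage_smul g) hYne]
    exact hmemP _ (hlift g t ▸ hgxK)

/-- for a free Denjoy action of a countably infinite discrete abelian
group with unique minimal set `Y`, the restricted action of `G` on `𝕋 \ Y` is free and
proper: every compact `K ⊆ 𝕋 \ Y` meets only finitely many of its translates. -/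
theorem statement7 (G : Type*) [CommGroup G] [Countable G] [Infinite G] [MulAction G T1]
    (hD : IsDenjoy G) (hfree : FreeAction G)
    (Y : Set T1) (hY : IsMinimalSet G Y)
    (hYuniq : ∀ Z : Set T1, IsMinimalSet G Z → Z = Y) (hYproper : Y ≠ Set.univ) :
    (∀ (g : G), ∀ x ∈ Yᶜ, g • x = x → g = 1) ∧
    ∀ K : Set T1, K ⊆ Yᶜ → IsCompact K →
      {g : G | ((fun x : T1 => g • x) '' K ∩ K).Nonempty}.Finite :=
  statement7_general G hD hfree Y hY
end
end

section
/- Let G ↷ 𝕋 be a Denjoy action of a countably infinite discrete abelian group with unique invariant probability measure μ and injective rotation number homomorphism ρ : G → 𝕋. Then for every g ∈ G and every x ∈ 𝕋, the measure of the positively-oriented arc (x, gx] equals ρ(g); in particular it does not depend on x. -/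
open MeasureTheory Topology Filter Set Function

noncomputable section

variable (G : Type*) [Group G] [MulAction G T1]

/-- The representative in `[0,1)` of a point of the circle. -/
def repIco (y : T1) : ℝ := ((AddCircle.equivIco 1 0 y : Set.Ico (0:ℝ) (0 + 1)) : ℝ)

/-!
For `g ≠ 1` the map `x ↦ g • x` has no fixed point. Invariance of `μ` then makes
`ψ x = μ (x, g x]` constant: measuring `(x, g y]` through `y` and through `g x` gives two values
that differ by an integer, while `ψ` takes values in `(0, 1]`. Positivity holds because a null arc
`(x, g x]` would force the orbit of `x` to creep monotonically around the circle towards a fixed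
point. If `c` is this constant and `F` lifts `g`, then `φ t = ⌊t⌋ + μ (0, t]` stays within `1` of the
identity and satisfies `φ (F t) = φ t + c + ⌊F t - t⌋`. The displacement `F t - t` never hits an
integer, so its floor is a constant `k`; hence `Fⁿ 0 / n → c + k` and the rotation number of `g` is
`c mod 1`.
-/

lemma repIco_coe (s : ℝ) : repIco (s : T1) = Int.fract s := by
  simp [repIco, AddCircle.coe_equivIco_mk_apply]

lemma repIco_mem_Ico (z : T1) : repIco z ∈ Ico (0 : ℝ) 1 := by
  simpa [repIco] using (AddCircle.equivIco 1 0 z).2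

lemma coe_repIco (z : T1) : ((repIco z : ℝ) : T1) = z :=
  (AddCircle.equivIco 1 0).symm_apply_apply z

lemma repIco_eq_zero_iff {z : T1} : repIco z = 0 ↔ z = 0 := by
  refine ⟨fun h => ?_, ?_⟩
  · rw [← coe_repIco z, h, AddCircle.coe_zero]
  · rintro rfl
    simpa using repIco_coe 0

@[simp] lemma repIco_zero : repIco 0 = 0 := repIco_eq_zero_iff.2 rfl

lemma measurable_repIco : Measurable repIco :=
  measurable_subtype_coe.comp (AddCircle.measurableEquivIco 1 0).measurable

lemma repIco_sub_sub (x y z : T1) :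
    repIco (z - y) = Int.fract (repIco (z - x) - repIco (y - x)) := by
  rw [← repIco_coe, AddCircle.coe_sub, coe_repIco, coe_repIco, sub_sub_sub_cancel_right]

lemma repIco_coe_add_sub {a s : ℝ} (hs : s ∈ Ico (0 : ℝ) 1) :
    repIco (((a + s : ℝ) : T1) - a) = s := by
  rw [← AddCircle.coe_sub, add_sub_cancel_left, repIco_coe, Int.fract_eq_self.2 hs]

lemma exists_mem_Ico_coe_add_eq (a : ℝ) (z : T1) : ∃ s ∈ Ico (0 : ℝ) 1, ((a + s : ℝ) : T1) = z :=
  ⟨repIco (z - a), repIco_mem_Ico _, by rw [AddCircle.coe_add, coe_repIco, add_sub_cancel]⟩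

lemma coe_add_intCast (t : ℝ) (m : ℤ) : ((t + m : ℝ) : T1) = t := by
  rw [← AddCircle.coe_fract, Int.fract_add_intCast, AddCircle.coe_fract]

lemma fract_sub_eq_ite {s u : ℝ} (hs : s ∈ Ico (0 : ℝ) 1) (hu : u ∈ Ico (0 : ℝ) 1) :
    Int.fract (s - u) = if u ≤ s then s - u else s - u + 1 := by
  split_ifs with h
  · exact Int.fract_eq_self.2 ⟨by linarith, by linarith [hs.2, hu.1]⟩
  · rw [← Int.fract_add_one, Int.fract_eq_self.2 ⟨by linarith [hs.1, hu.2], by linarith⟩]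

lemma indicator_Ioc_add_indicator_Ioc_fract {s u v : ℝ} (hs : s ∈ Ico (0 : ℝ) 1)
    (hu : u ∈ Ico (0 : ℝ) 1) (hv : v ∈ Ico (0 : ℝ) 1) :
    (Ioc 0 u).indicator 1 s + (Ioc 0 (Int.fract (v - u))).indicator 1 (Int.fract (s - u)) =
      (Ioc 0 v).indicator 1 s + (u + Int.fract (v - u) - v) := by
  rw [fract_sub_eq_ite hs hu, fract_sub_eq_ite hv hu]
  simp only [indicator_apply, mem_Ioc, Pi.one_apply]
  obtain ⟨hs0, hs1⟩ := hs; obtain ⟨hu0, hu1⟩ := hu; obtain ⟨hv0, hv1⟩ := hv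
  split_ifs <;> grind

/-- The positively oriented arc `(x, y]`. -/
def arc (x y : T1) : Set T1 := (fun z => repIco (z - x)) ⁻¹' Ioc 0 (repIco (y - x))

lemma measurableSet_arc (x y : T1) : MeasurableSet (arc x y) :=
  (measurable_repIco.comp (measurable_id.sub_const x)) measurableSet_Ioc

@[simp] lemma arc_self (x : T1) : arc x x = ∅ := by
  ext z
  simp [arc]

lemma image_coe_Ioc_repIco (x y : T1) :
    (fun t : ℝ => x + (t : T1)) '' Ioc 0 (repIco (y - x)) = arc x y := by
  ext z
  constructor
  · rintro ⟨t, ht, rfl⟩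
    have ht1 : t < 1 := ht.2.trans_lt (repIco_mem_Ico _).2
    simpa [arc, repIco_coe, Int.fract_eq_self.2 ⟨ht.1.le, ht1⟩] using ht
  · intro hz
    exact ⟨repIco (z - x), hz, by simp only [coe_repIco, add_sub_cancel]⟩

lemma indicator_arc (x y w : T1) :
    (arc x y).indicator (1 : T1 → ℝ) w = (Ioc 0 (repIco (y - x))).indicator 1 (repIco (w - x)) :=
  indicator_comp_right (s := Ioc 0 (repIco (y - x))) (fun z => repIco (z - x)) (g := 1)

def winding (x y z : T1) : ℝ := repIco (y - x) + repIco (z - y) - repIco (z - x)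

lemma winding_eq_zero_or_one (x y z : T1) : winding x y z = 0 ∨ winding x y z = 1 := by
  rw [winding, repIco_sub_sub x y z,
    fract_sub_eq_ite (repIco_mem_Ico (z - x)) (repIco_mem_Ico (y - x))]
  split_ifs
  · left; ring
  · right; ring

lemma winding_nonneg (x y z : T1) : 0 ≤ winding x y z := by
  rcases winding_eq_zero_or_one x y z with h | h <;> simp [h]

lemma indicator_arc_add_indicator_arc (x y z w : T1) :
    (arc x y).indicator 1 w + (arc y z).indicator 1 w =
      (arc x z).indicator (1 : T1 → ℝ) w + winding x y z := by
  rw [indicator_arc, indicator_arc, indicator_arc, winding, repIco_sub_sub x y z,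
    repIco_sub_sub x y w]
  exact indicator_Ioc_add_indicator_Ioc_fract (repIco_mem_Ico _) (repIco_mem_Ico _)
    (repIco_mem_Ico _)

section Measure

variable (μ : Measure T1)

/-- The lift of the degree-one map semiconjugating the action to rotations; `μ` is its
Lebesgue–Stieltjes measure. -/
def distributionLift (t : ℝ) : ℝ := ⌊t⌋ + μ.real (arc 0 t)

@[simp] lemma distributionLift_zero : distributionLift μ 0 = 0 := by
  simp [distributionLift]

variable [IsProbabilityMeasure μ]

lemma measureReal_arc_add_arc (x y z : T1) :
    μ.real (arc x y) + μ.real (arc y z) = μ.real (arc x z) + winding x y z := by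
  have hint : ∀ a b, Integrable ((arc a b).indicator (1 : T1 → ℝ)) μ := fun a b =>
    (integrable_const 1).indicator (measurableSet_arc a b)
  rw [← integral_indicator_one (measurableSet_arc x y),
    ← integral_indicator_one (measurableSet_arc y z),
    ← integral_indicator_one (measurableSet_arc x z), ← integral_add (hint _ _) (hint _ _)]
  simp_rw [indicator_arc_add_indicator_arc x y z]
  rw [integral_add (hint _ _) (integrable_const _), integral_const, probReal_univ, one_smul]

lemma measureReal_arc_add_arc_swap {x y : T1} (hxy : x ≠ y) :
    μ.real (arc x y) + μ.real (arc y x) = 1 := by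
  have h := measureReal_arc_add_arc μ x y x
  rcases winding_eq_zero_or_one x y x with hw | hw
  · refine absurd ?_ hxy
    have h1 := (repIco_mem_Ico (y - x)).1
    have h2 := (repIco_mem_Ico (x - y)).1
    simp only [winding, sub_self, repIco_zero] at hw
    exact (sub_eq_zero.1 (repIco_eq_zero_iff.1 (by linarith))).symm
  · simpa [hw] using h

lemma abs_distributionLift_sub_le (t : ℝ) : |distributionLift μ t - t| ≤ 1 := by
  have := Int.floor_add_fract t
  have : μ.real (arc 0 t) ≤ 1 := measureReal_le_one
  have : 0 ≤ μ.real (arc 0 t) := measureReal_nonneg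
  rw [distributionLift, abs_le]
  constructor <;> linarith [Int.fract_nonneg t, Int.fract_lt_one t]

end Measure

lemma exists_fixedPt_of_monotone_repIco_iterate {f : T1 → T1} (hf : Continuous f) (x : T1)
    (hmono : Monotone fun n => repIco (f^[n] x - x)) : ∃ z, f z = z := by
  set s : ℕ → ℝ := fun n => repIco (f^[n] x - x)
  have hs : Tendsto s atTop (𝓝 (⨆ n, s n)) :=
    tendsto_atTop_ciSup hmono ⟨1, by rintro _ ⟨n, rfl⟩; exact (repIco_mem_Ico _).2.le⟩
  have horbit : Tendsto (fun n => f^[n] x) atTop (𝓝 (x + ((⨆ n, s n : ℝ) : T1))) := by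
    have h : (fun n => f^[n] x) = fun n => x + ((s n : ℝ) : T1) := by
      funext n
      simp only [s, coe_repIco, add_sub_cancel]
    rw [h]
    exact ((continuous_const.add (AddCircle.continuous_mk' 1)).tendsto _).comp hs
  refine ⟨_, tendsto_nhds_unique ?_ (horbit.comp (tendsto_add_atTop_nat 1))⟩
  simpa only [comp_def, iterate_succ_apply'] using (hf.tendsto _).comp horbit

lemma floor_eq_floor_of_forall_ne_intCast {D : ℝ → ℝ} (hD : Continuous D)
    (hint : ∀ t (m : ℤ), D t ≠ m) (s t : ℝ) : ⌊D s⌋ = ⌊D t⌋ := by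
  wlog h : ⌊D s⌋ ≤ ⌊D t⌋ generalizing s t
  · exact (this t s (le_of_not_ge h)).symm
  refine h.antisymm (not_lt.1 fun hlt => ?_)
  have hmem : (⌊D t⌋ : ℝ) ∈ Icc (D s) (D t) := by
    refine ⟨(Int.lt_floor_add_one (D s)).le.trans ?_, Int.floor_le _⟩
    exact_mod_cast hlt
  obtain ⟨r, hr⟩ := intermediate_value_univ s t hD hmem
  exact hint r _ hr

lemma tendsto_div_of_abs_sub_mul_le {u : ℕ → ℝ} {r C : ℝ} (h : ∀ n : ℕ, |u n - n * r| ≤ C) :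
    Tendsto (fun n : ℕ => u n / n) atTop (𝓝 r) := by
  have hdev : Tendsto (fun n : ℕ => (u n - n * r) / n) atTop (𝓝 0) := by
    refine squeeze_zero_norm (fun n => ?_) (tendsto_const_div_atTop_nhds_zero_nat C)
    rw [norm_div, Real.norm_eq_abs, Real.norm_natCast]
    exact div_le_div_of_nonneg_right (h n) n.cast_nonneg
  refine (hdev.const_add r).congr' ?_ |>.trans (by rw [add_zero])
  filter_upwards [eventually_ne_atTop 0] with n hn
  field_simp
  ring

namespace IsLiftOf

variable {F : ℝ → ℝ} {f : T1 → T1}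

lemma coe_apply (hF : IsLiftOf F f) (t : ℝ) : ((F t : ℝ) : T1) = f t := hF.2.2.2 t

lemma strictMono (hF : IsLiftOf F f) : StrictMono F := hF.2.1

lemma continuous (hF : IsLiftOf F f) : Continuous f := by
  have h : f ∘ ((↑) : ℝ → T1) = ((↑) : ℝ → T1) ∘ F := funext fun t => (hF.coe_apply t).symm
  exact (QuotientAddGroup.isQuotientMap_mk _).continuous_iff.2
    (h ▸ (AddCircle.continuous_mk' 1).comp hF.1)

lemma repIco_sub (hF : IsLiftOf F f) (a : ℝ) {s : ℝ} (hs : s ∈ Ico (0 : ℝ) 1) :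
    repIco (f ((a + s : ℝ) : T1) - f a) = F (a + s) - F a := by
  have hlt : F (a + s) < F a + 1 := hF.2.2.1 a ▸ hF.strictMono (by linarith [hs.2])
  have hle : F a ≤ F (a + s) := hF.strictMono.monotone (by linarith [hs.1])
  rw [← hF.coe_apply, ← hF.coe_apply, ← AddCircle.coe_sub, repIco_coe,
    Int.fract_eq_self.2 ⟨by linarith, by linarith⟩]

lemma preimage_arc (hF : IsLiftOf F f) (x y : T1) : f ⁻¹' arc (f x) (f y) = arc x y := by
  ext z
  obtain ⟨a, rfl⟩ : ∃ a : ℝ, (a : T1) = x := ⟨_, coe_repIco x⟩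
  obtain ⟨s, hs, rfl⟩ := exists_mem_Ico_coe_add_eq a z
  obtain ⟨u, hu, rfl⟩ := exists_mem_Ico_coe_add_eq a y
  simp only [arc, mem_preimage, hF.repIco_sub a hs, hF.repIco_sub a hu, repIco_coe_add_sub hs,
    repIco_coe_add_sub hu, mem_Ioc, sub_pos, sub_le_sub_iff_right, hF.strictMono.lt_iff_lt,
    hF.strictMono.le_iff_le, lt_add_iff_pos_right, add_le_add_iff_left]

lemma floor_sub_eq (hF : IsLiftOf F f) (hfix : ∀ x, f x ≠ x) (t : ℝ) : ⌊F t - t⌋ = ⌊F 0⌋ := by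
  refine (floor_eq_floor_of_forall_ne_intCast (D := fun s => F s - s) (hF.1.sub continuous_id)
    (fun s m hm => ?_) t 0).trans (by rw [sub_zero])
  refine hfix s ?_
  rw [← hF.coe_apply, show F s = s + m by linarith, coe_add_intCast]

variable {μ : Measure T1}

lemma measureReal_arc_apply (hF : IsLiftOf F f) (hμ : μ.map f = μ) (x y : T1) :
    μ.real (arc (f x) (f y)) = μ.real (arc x y) := by
  conv_lhs => rw [← hμ]
  rw [map_measureReal_apply hF.continuous.measurable (measurableSet_arc _ _), hF.preimage_arc]

lemma measureReal_arc_iterate (hF : IsLiftOf F f) (hμ : μ.map f = μ) (x y : T1) (n : ℕ) :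
    μ.real (arc (f^[n] x) (f^[n] y)) = μ.real (arc x y) := by
  induction n with
  | zero => rfl
  | succ n ih => rw [iterate_succ_apply', iterate_succ_apply', hF.measureReal_arc_apply hμ, ih]

variable [IsProbabilityMeasure μ]


lemma measureReal_arc_pos (hF : IsLiftOf F f) (hμ : μ.map f = μ) (hfix : ∀ x, f x ≠ x)
    (x : T1) : 0 < μ.real (arc x (f x)) := by
  by_contra! h0
  have hstep : ∀ n, μ.real (arc (f^[n] x) (f^[n + 1] x)) = 0 := fun n => by
    rw [iterate_succ_apply, hF.measureReal_arc_iterate hμ]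
    exact le_antisymm h0 measureReal_nonneg
  have hcocycle := fun n => measureReal_arc_add_arc μ x (f^[n] x) (f^[n + 1] x)
  have hzero : ∀ n, μ.real (arc x (f^[n] x)) = 0 := by
    intro n
    induction n with
    | zero => simp
    | succ n ih =>
      have h := hcocycle n
      have : 0 ≤ μ.real (arc x (f^[n + 1] x)) := measureReal_nonneg
      rw [ih, hstep] at h
      linarith [winding_nonneg x (f^[n] x) (f^[n + 1] x)]
  have hmono : Monotone fun n => repIco (f^[n] x - x) := by
    refine monotone_nat_of_le_succ fun n => ?_
    have hw : winding x (f^[n] x) (f^[n + 1] x) = 0 := by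
      have h := hcocycle n
      rw [hzero, hzero, hstep] at h
      linarith
    rw [winding] at hw
    linarith [(repIco_mem_Ico (f^[n + 1] x - f^[n] x)).1]
  obtain ⟨z, hz⟩ := exists_fixedPt_of_monotone_repIco_iterate hF.continuous x hmono
  exact hfix z hz

lemma measureReal_arc_apply_self_eq (hF : IsLiftOf F f) (hμ : μ.map f = μ)
    (hfix : ∀ x, f x ≠ x) (x y : T1) : μ.real (arc x (f x)) = μ.real (arc y (f y)) := by
  have h1 := measureReal_arc_add_arc μ x y (f y)
  have h2 := measureReal_arc_add_arc μ x (f x) (f y)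
  rw [hF.measureReal_arc_apply hμ] at h2
  have := hF.measureReal_arc_pos hμ hfix x
  have := hF.measureReal_arc_pos hμ hfix y
  have : μ.real (arc x (f x)) ≤ 1 := measureReal_le_one
  have : μ.real (arc y (f y)) ≤ 1 := measureReal_le_one
  rcases winding_eq_zero_or_one x y (f y) with h | h <;>
    rcases winding_eq_zero_or_one x (f x) (f y) with h' | h' <;> linarith

lemma distributionLift_apply (hF : IsLiftOf F f) {c : ℝ} (hc : ∀ x, μ.real (arc x (f x)) = c)
    (t : ℝ) : distributionLift μ (F t) = distributionLift μ t + c + ⌊F t - t⌋ := by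
  have h := measureReal_arc_add_arc μ 0 t (f t)
  rw [hc, ← hF.coe_apply, winding, ← AddCircle.coe_sub] at h
  simp only [sub_zero, repIco_coe] at h
  simp only [distributionLift, Int.fract] at *
  linarith

end IsLiftOf

lemma HasRotationNumber.eq_coe_measureReal_arc {f : T1 → T1} {r : T1}
    (hr : HasRotationNumber f r) {μ : Measure T1} [IsProbabilityMeasure μ] (hμ : μ.map f = μ)
    (hfix : ∀ x, f x ≠ x) (x : T1) : r = ((μ.real (arc x (f x)) : ℝ) : T1) := by
  obtain ⟨F, hF, hlim⟩ := hr
  set c := μ.real (arc x (f x))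
  have hc : ∀ y, μ.real (arc y (f y)) = c := fun y =>
    (hF.measureReal_arc_apply_self_eq hμ hfix x y).symm
  have hiter : ∀ n : ℕ, distributionLift μ (F^[n] 0) = n * (c + ⌊F 0⌋) := by
    intro n
    induction n with
    | zero => simp
    | succ n ih =>
      rw [iterate_succ_apply', hF.distributionLift_apply hc, ih, hF.floor_sub_eq hfix]
      push_cast
      ring
  have hdiv : Tendsto (fun n : ℕ => F^[n] 0 / n) atTop (𝓝 (c + ⌊F 0⌋)) :=
    tendsto_div_of_abs_sub_mul_le (C := 1) fun n => by
      rw [← hiter, abs_sub_comm]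
      exact abs_distributionLift_sub_le μ _
  exact (tendsto_nhds_unique (hlim 0) (((AddCircle.continuous_mk' 1).tendsto _).comp hdiv)).trans
    (coe_add_intCast c _)

theorem statement13_general (G : Type*) [CommGroup G]
    [MulAction G T1]
    (hfree : FreeAction G)
    (ρ : G → T1) (hρhom : ∀ g h : G, ρ (g * h) = ρ g + ρ h)
    (hρ : ∀ g : G, HasRotationNumber (fun x : T1 => g • x) (ρ g))
    (μ : Measure T1) [IsProbabilityMeasure μ]
    (hμinv : ∀ g : G, Measure.map (fun x : T1 => g • x) μ = μ) :
    ∀ (g : G) (x : T1),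
      μ ((fun t : ℝ => x + (t : T1)) '' Set.Ioc 0 (repIco ((g • x) - x))) =
        ENNReal.ofReal (repIco (ρ g)) := by
  intro g x
  rcases eq_or_ne g 1 with rfl | hg
  · have hρ1 : ρ 1 = 0 := by simpa using hρhom 1 1
    simp [hρ1]
  have hfix : ∀ h : G, h ≠ 1 → ∀ y : T1, h • y ≠ y := fun h hh y hy => hh (hfree h y hy)
  have hρg := (hρ g).eq_coe_measureReal_arc (hμinv g) (hfix g hg) x
  have hlt : μ.real (arc x (g • x)) < 1 := by
    obtain ⟨F, hF, -⟩ := hρ g⁻¹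
    have hpos := hF.measureReal_arc_pos (hμinv g⁻¹) (hfix g⁻¹ (inv_ne_one.2 hg)) (g • x)
    rw [inv_smul_smul] at hpos
    linarith [measureReal_arc_add_arc_swap μ (hfix g hg x).symm]
  rw [image_coe_Ioc_repIco, hρg, repIco_coe, Int.fract_eq_self.2 ⟨measureReal_nonneg, hlt⟩,
    ofReal_measureReal]

/-- for a Denjoy action of a countably infinite discrete abelian
group with unique invariant probability measure `μ` and injective rotation number
homomorphism `ρ`, the measure of the positively-oriented arc `(x, gx]` equals `ρ(g)`
(as the representative in `[0,1)`); in particular it is independent of `x`. -/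
theorem statement13 (G : Type*) [CommGroup G] [Countable G] [Infinite G]
    [MulAction G T1]
    (hD : IsDenjoy G) (hfree : FreeAction G)
    (ρ : G → T1) (hρhom : ∀ g h : G, ρ (g * h) = ρ g + ρ h)
    (hρinj : Function.Injective ρ)
    (hρ : ∀ g : G, HasRotationNumber (fun x : T1 => g • x) (ρ g))
    (μ : Measure T1) [IsProbabilityMeasure μ] (hμreg : μ.Regular)
    (hμinv : ∀ g : G, Measure.map (fun x : T1 => g • x) μ = μ)
    (hμuniq : ∀ ν : Measure T1, IsProbabilityMeasure ν → ν.Regular →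
      (∀ g : G, Measure.map (fun x : T1 => g • x) ν = ν) → ν = μ) :
    ∀ (g : G) (x : T1),
      μ ((fun t : ℝ => x + (t : T1)) '' Set.Ioc 0 (repIco ((g • x) - x))) =
        ENNReal.ofReal (repIco (ρ g)) :=
  statement13_general G hfree ρ hρhom hρ μ hμinv
end
end
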